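/- arXiv:1406.4834 — 10 statements merged into one kernel-verified Lean document; each statement's English description precedes it below -/
import Mathlib

section
/- Let (λ_j)_{j≥0} and (a_j)_{j≥0} be nonnegative real sequences with ∑_{i=0}^∞ λ_i a_i < ∞, and set Λ_k := ∑_{i=0}^k λ_i. If (a_j) is monotonically nonincreasing, then: (i) for every k with Λ_k > 0, a_k ≤ (1/Λ_k)·∑_{i=0}^∞ λ_i a_i; (ii) (Λ_k − Λ_{⌈k/2⌉})·a_k → 0 as k → ∞; (iii) if inf_j λ_j > 0 then (k+1)·a_k → 0; (iv) if λ_k = (k+1)^p for some p ≥ 0 and all k ≥ 1, then (k+1)^{p+1}·a_k → 0. -/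
/-!
Because `a` is nonincreasing, `(Λ_k - Λ_m) a_k = ∑_{m < i ≤ k} λ_i a_k ≤ ∑_{m < i ≤ k} λ_i a_i`,
which is at most the tail `∑_{i > m} λ_i a_i` of the convergent series. Taking `m = -1` gives (i);
taking `m = ⌈k/2⌉` gives (ii), since that tail tends to `0` as `k → ∞`. For (iii) and (iv) the
`⌊k/2⌋` weights `λ_i` with `⌈k/2⌉ < i ≤ k` are each at least `ε`, resp. `((k+1)/2)^p`, so
`Λ_k - Λ_{⌈k/2⌉}` is bounded below by a multiple of `k + 1`, resp. `(k+1)^(p+1)`.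
-/

open Filter Finset Topology

section

variable {lam a : ℕ → ℝ}

theorem sum_Ico_mul_le_sum_Ico_mul_of_antitone (hlam : ∀ n, 0 ≤ lam n) (hmono : Antitone a)
    (m k : ℕ) : (∑ i ∈ Ico m (k + 1), lam i) * a k ≤ ∑ i ∈ Ico m (k + 1), lam i * a i := by
  rw [sum_mul]
  refine sum_le_sum fun i hi => mul_le_mul_of_nonneg_left (hmono ?_) (hlam i)
  have := (mem_Ico.mp hi).2
  omega

theorem sum_Ico_mul_le_tsum_nat_add_of_antitone (hlam : ∀ n, 0 ≤ lam n) (ha : ∀ n, 0 ≤ a n)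
    (hsum : Summable fun i => lam i * a i) (hmono : Antitone a) (m k : ℕ) :
    (∑ i ∈ Ico m (k + 1), lam i) * a k ≤ ∑' j, lam (j + m) * a (j + m) := calc
  _ ≤ ∑ i ∈ Ico m (k + 1), lam i * a i := sum_Ico_mul_le_sum_Ico_mul_of_antitone hlam hmono m k
  _ = ∑ j ∈ range (k + 1 - m), lam (j + m) * a (j + m) := by
    simp only [sum_Ico_eq_sum_range, add_comm m]
  _ ≤ _ := ((summable_nat_add_iff m).mpr hsum).sum_le_tsum _
    fun j _ => mul_nonneg (hlam _) (ha _)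

theorem le_one_div_sum_range_mul_tsum_of_antitone (hlam : ∀ n, 0 ≤ lam n) (ha : ∀ n, 0 ≤ a n)
    (hsum : Summable fun i => lam i * a i) (hmono : Antitone a) (k : ℕ)
    (hk : 0 < ∑ i ∈ range (k + 1), lam i) :
    a k ≤ (1 / ∑ i ∈ range (k + 1), lam i) * ∑' i, lam i * a i := by
  rw [one_div, inv_mul_eq_div, le_div_iff₀ hk, mul_comm]
  calc (∑ i ∈ range (k + 1), lam i) * a k ≤ ∑ i ∈ range (k + 1), lam i * a i := by
        simpa only [range_eq_Ico] using sum_Ico_mul_le_sum_Ico_mul_of_antitone hlam hmono 0 k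
    _ ≤ ∑' i, lam i * a i := hsum.sum_le_tsum _ fun i _ => mul_nonneg (hlam i) (ha i)

/-- In `ℕ`, `(k + 1) / 2 = ⌈k/2⌉`, so the sum runs over `⌈k/2⌉ < i ≤ k`. -/
theorem tendsto_sum_Ico_half_mul_of_antitone (hlam : ∀ n, 0 ≤ lam n) (ha : ∀ n, 0 ≤ a n)
    (hsum : Summable fun i => lam i * a i) (hmono : Antitone a) :
    Tendsto (fun k => (∑ i ∈ Ico ((k + 1) / 2 + 1) (k + 1), lam i) * a k) atTop (𝓝 0) := by
  have hhalf : Tendsto (fun k : ℕ => (k + 1) / 2 + 1) atTop atTop :=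
    tendsto_atTop_atTop.mpr fun n => ⟨2 * n, fun k hk => by omega⟩
  refine squeeze_zero (fun k => mul_nonneg (sum_nonneg fun i _ => hlam i) (ha k))
    (fun k => sum_Ico_mul_le_tsum_nat_add_of_antitone hlam ha hsum hmono _ k)
    ((tendsto_sum_nat_add fun i => lam i * a i).comp hhalf)

theorem tendsto_succ_mul_mul_of_le_lam (hlam : ∀ n, 0 ≤ lam n) (ha : ∀ n, 0 ≤ a n)
    (hsum : Summable fun i => lam i * a i) (hmono : Antitone a) {c : ℕ → ℝ}
    (hc0 : ∀ k, 0 ≤ c k) (hc : ∀ k i, (k + 1) / 2 < i → i ≤ k → c k ≤ lam i) :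
    Tendsto (fun k : ℕ => ((k : ℝ) + 1) * c k * a k) atTop (𝓝 0) := by
  refine squeeze_zero' (.of_forall fun k => by have := hc0 k; have := ha k; positivity) ?_
    (by simpa using (tendsto_sum_Ico_half_mul_of_antitone hlam ha hsum hmono).const_mul 4)
  filter_upwards [eventually_ge_atTop 2] with k hk
  have hsegment : ((k / 2 : ℕ) : ℝ) * c k ≤ ∑ i ∈ Ico ((k + 1) / 2 + 1) (k + 1), lam i := by
    have hcard : #(Ico ((k + 1) / 2 + 1) (k + 1)) = k / 2 := by rw [Nat.card_Ico]; omega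
    simpa [hcard] using card_nsmul_le_sum (Ico ((k + 1) / 2 + 1) (k + 1)) lam (c k) fun i hi => by
      have := mem_Ico.mp hi
      exact hc k i (by omega) (by omega)
  calc ((k : ℝ) + 1) * c k * a k ≤ 4 * ((k / 2 : ℕ) : ℝ) * c k * a k := by
        gcongr
        · exact ha k
        · exact hc0 k
        · exact_mod_cast (by omega : k + 1 ≤ 4 * (k / 2))
    _ ≤ 4 * ((∑ i ∈ Ico ((k + 1) / 2 + 1) (k + 1), lam i) * a k) := by
        rw [mul_assoc 4, mul_assoc 4]
        gcongr
        exact ha k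

end

/-- Lemma 1 (summable sequence convergence rates), Part 1 (monotonicity):
if `(λ_j)` and `(a_j)` are nonnegative, `∑ λ_i a_i < ∞` and `(a_j)` is
monotonically nonincreasing, then (i) `a_k ≤ (1/Λ_k) ∑_{i=0}^∞ λ_i a_i` whenever `Λ_k > 0`,
(ii) `(Λ_k − Λ_{⌈k/2⌉}) a_k → 0`, (iii) if `inf λ_j > 0` then `(k+1) a_k → 0`, and
(iv) if `λ_k = (k+1)^p` for all `k ≥ 1` (with `p ≥ 0`) then `(k+1)^{p+1} a_k → 0`. -/
theorem summable_sequence_rates_monotone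
    (lam a : ℕ → ℝ)
    (hlam : ∀ n, 0 ≤ lam n) (ha : ∀ n, 0 ≤ a n)
    (hsum : Summable (fun i => lam i * a i))
    (hmono : Antitone a) :
    (∀ k : ℕ, 0 < (∑ i ∈ Finset.range (k + 1), lam i) →
        a k ≤ (1 / ∑ i ∈ Finset.range (k + 1), lam i) * ∑' i, lam i * a i) ∧
    Filter.Tendsto
      (fun k : ℕ =>
        ((∑ i ∈ Finset.range (k + 1), lam i) -
          ∑ i ∈ Finset.range ((k + 1) / 2 + 1), lam i) * a k)
      Filter.atTop (nhds 0) ∧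
    ((∃ ε > (0 : ℝ), ∀ j, ε ≤ lam j) →
      Filter.Tendsto (fun k : ℕ => ((k : ℝ) + 1) * a k) Filter.atTop (nhds 0)) ∧
    (∀ p : ℝ, 0 ≤ p → (∀ k : ℕ, 1 ≤ k → lam k = ((k : ℝ) + 1) ^ p) →
      Filter.Tendsto (fun k : ℕ => ((k : ℝ) + 1) ^ (p + 1) * a k) Filter.atTop (nhds 0)) := by
  refine ⟨le_one_div_sum_range_mul_tsum_of_antitone hlam ha hsum hmono, ?_, ?_, ?_⟩
  · convert tendsto_sum_Ico_half_mul_of_antitone hlam ha hsum hmono using 3 with k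
    rw [sum_Ico_eq_sub _ (by omega)]
  · rintro ⟨ε, hε, hεlam⟩
    have := (tendsto_succ_mul_mul_of_le_lam hlam ha hsum hmono (fun _ => hε.le)
      fun _ i _ _ => hεlam i).const_mul ε⁻¹
    rw [mul_zero] at this
    convert this using 2 with k
    field_simp
  · intro p hp hlamp
    have hlam_ge : ∀ k i : ℕ, (k + 1) / 2 < i → i ≤ k → (((k : ℝ) + 1) / 2) ^ p ≤ lam i := by
      intro k i hki _
      rw [hlamp i (by omega)]
      refine Real.rpow_le_rpow (by positivity) ?_ hp
      rw [div_le_iff₀ two_pos]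
      exact_mod_cast (by omega : k + 1 ≤ (i + 1) * 2)
    have := (tendsto_succ_mul_mul_of_le_lam hlam ha hsum hmono
      (fun k => by positivity) hlam_ge).const_mul (2 ^ p)
    rw [mul_zero] at this
    convert this using 2 with k
    have hk : (0 : ℝ) < k + 1 := by positivity
    rw [Real.div_rpow hk.le zero_le_two, Real.rpow_add_one hk.ne']
    field_simp
end

section
/- Let (λ_j)_{j≥0} and (a_j)_{j≥0} be nonnegative real sequences with ∑_{i=0}^∞ λ_i a_i < ∞, set Λ_k := ∑_{i=0}^k λ_i, and let (e_j)_{j≥0} be a sequence of nonnegative reals such that a_{k+1} ≤ a_k + e_k for all k and ∑_{i=0}^∞ Λ_i e_i < ∞. Then: (i) for every k with Λ_k > 0, a_k ≤ (1/Λ_k)·(∑_{i=0}^∞ λ_i a_i + ∑_{i=0}^∞ Λ_i e_i); (ii) (Λ_k − Λ_{⌈k/2⌉})·a_k → 0 as k → ∞; in particular, if inf_j λ_j > 0 then (k+1)·a_k → 0. -/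
/-!
Propagating `a_{k+1} ≤ a_k + e_k` gives `a_k ≤ a_i + ∑_{i ≤ j < k} e_j` for `i ≤ k`. Multiplying by
`λ_i`, summing over `m ≤ i ≤ k` and exchanging the order of summation in the error term yields
`(∑_{m ≤ i ≤ k} λ_i) a_k ≤ ∑_{i ≥ m} λ_i a_i + ∑_{j ≥ m} Λ_j e_j`. For `m = 0` this is (i); for
`m = ⌈k/2⌉ + 1 → ∞` the right-hand side is a sum of tails of convergent series, which gives (ii).
If `λ_j ≥ ε > 0`, then `Λ_k − Λ_{⌈k/2⌉} ≥ ε ⌊k/2⌋`, which dominates `ε (k + 1) / 4` for `k ≥ 2`.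
-/

open Finset Filter Topology

theorem le_add_sum_Ico_of_le_add {α : Type*} [AddCommMonoid α] [Preorder α] [AddRightMono α]
    {a e : ℕ → α} (hrec : ∀ k, a (k + 1) ≤ a k + e k) {i k : ℕ} (hik : i ≤ k) :
    a k ≤ a i + ∑ j ∈ Ico i k, e j := by
  induction k, hik using Nat.le_induction with
  | base => simp
  | succ k hik ih =>
    rw [sum_Ico_succ_top hik, ← add_assoc]
    exact (hrec k).trans (add_le_add_left ih _)

theorem sum_Ico_mul_le_of_le_add {R : Type*} [CommSemiring R] [PartialOrder R] [IsOrderedRing R]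
    {lam a e : ℕ → R} (hlam : ∀ n, 0 ≤ lam n) (he : ∀ n, 0 ≤ e n)
    (hrec : ∀ k, a (k + 1) ≤ a k + e k) {m k : ℕ} (hmk : m ≤ k) :
    (∑ i ∈ Ico m (k + 1), lam i) * a k ≤
      ∑ i ∈ Ico m (k + 1), lam i * a i + ∑ j ∈ Ico m k, (∑ i ∈ range (j + 1), lam i) * e j :=
  calc (∑ i ∈ Ico m (k + 1), lam i) * a k
      ≤ ∑ i ∈ Ico m (k + 1), (lam i * a i + ∑ j ∈ Ico i k, lam i * e j) := by
        rw [sum_mul]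
        refine sum_le_sum fun i hi => ?_
        rw [← mul_sum, ← mul_add]
        exact mul_le_mul_of_nonneg_left
          (le_add_sum_Ico_of_le_add hrec (Nat.lt_succ_iff.mp (mem_Ico.mp hi).2)) (hlam i)
    _ = ∑ i ∈ Ico m (k + 1), lam i * a i + ∑ j ∈ Ico m k, (∑ i ∈ Ico m (j + 1), lam i) * e j := by
        rw [sum_add_distrib, sum_Ico_succ_top hmk (fun i => ∑ j ∈ Ico i k, lam i * e j),
          Ico_self, sum_empty, add_zero, sum_Ico_Ico_comm]
        simp only [sum_mul]
    _ ≤ _ := by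
        refine add_le_add_right (sum_le_sum fun j _ => mul_le_mul_of_nonneg_right ?_ (he j)) _
        exact sum_le_sum_of_subset_of_nonneg (fun i hi => mem_range.2 (mem_Ico.1 hi).2)
          fun i _ _ => hlam i

theorem sum_Ico_le_tsum_nat_add {f : ℕ → ℝ} (hf : ∀ i, 0 ≤ f i) (hfs : Summable f) (m n : ℕ) :
    ∑ i ∈ Ico m n, f i ≤ ∑' i, f (i + m) := by
  rw [sum_Ico_eq_sum_range]
  simp_rw [add_comm m]
  exact ((summable_nat_add_iff m).2 hfs).sum_le_tsum _ fun i _ => hf _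

theorem sum_Ico_mul_le_tsum_tails {lam a e : ℕ → ℝ}
    (hlam : ∀ n, 0 ≤ lam n) (ha : ∀ n, 0 ≤ a n) (he : ∀ n, 0 ≤ e n)
    (hsum : Summable (fun i => lam i * a i)) (hrec : ∀ k, a (k + 1) ≤ a k + e k)
    (hesum : Summable (fun i => (∑ j ∈ range (i + 1), lam j) * e i)) (m k : ℕ) :
    (∑ i ∈ Ico m (k + 1), lam i) * a k ≤
      ∑' i, lam (i + m) * a (i + m) + ∑' i, (∑ j ∈ range (i + m + 1), lam j) * e (i + m) := by
  have hterm : ∀ i, 0 ≤ lam i * a i := fun i => mul_nonneg (hlam i) (ha i)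
  have herr : ∀ i, 0 ≤ (∑ j ∈ range (i + 1), lam j) * e i := fun i =>
    mul_nonneg (sum_nonneg fun j _ => hlam j) (he i)
  rcases le_or_gt m k with hmk | hkm
  · exact (sum_Ico_mul_le_of_le_add hlam he hrec hmk).trans <| add_le_add
      (sum_Ico_le_tsum_nat_add hterm hsum m (k + 1)) (sum_Ico_le_tsum_nat_add herr hesum m k)
  · rw [Ico_eq_empty_of_le hkm, sum_empty, zero_mul]
    exact add_nonneg (tsum_nonneg fun i => hterm _) (tsum_nonneg fun i => herr _)

theorem tendsto_sum_Ico_half_mul {lam a e : ℕ → ℝ}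
    (hlam : ∀ n, 0 ≤ lam n) (ha : ∀ n, 0 ≤ a n) (he : ∀ n, 0 ≤ e n)
    (hsum : Summable (fun i => lam i * a i)) (hrec : ∀ k, a (k + 1) ≤ a k + e k)
    (hesum : Summable (fun i => (∑ j ∈ range (i + 1), lam j) * e i)) :
    Tendsto (fun k => (∑ i ∈ Ico ((k + 1) / 2 + 1) (k + 1), lam i) * a k) atTop (𝓝 0) := by
  have hhalf : Tendsto (fun k => (k + 1) / 2 + 1) atTop atTop :=
    tendsto_add_atTop_nat 1 |>.comp <|
      (Nat.tendsto_div_const_atTop two_ne_zero).comp (tendsto_add_atTop_nat 1)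
  have htails := ((tendsto_sum_nat_add fun i => lam i * a i).add
    (tendsto_sum_nat_add fun i => (∑ j ∈ range (i + 1), lam j) * e i)).comp hhalf
  rw [add_zero] at htails
  refine squeeze_zero (fun k => mul_nonneg (sum_nonneg fun i _ => hlam i) (ha k)) (fun k => ?_)
    htails
  exact sum_Ico_mul_le_tsum_tails hlam ha he hsum hrec hesum _ k

theorem mul_add_one_le_four_mul_sum_Ico_half {lam : ℕ → ℝ} {ε : ℝ} (hε : 0 ≤ ε)
    (hlam : ∀ j, ε ≤ lam j) {k : ℕ} (hk : 2 ≤ k) :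
    ε * (k + 1) ≤ 4 * ∑ i ∈ Ico ((k + 1) / 2 + 1) (k + 1), lam i := by
  have hcard := card_nsmul_le_sum (Ico ((k + 1) / 2 + 1) (k + 1)) lam ε fun i _ => hlam i
  rw [Nat.card_Ico, nsmul_eq_mul] at hcard
  have hk4 : ((k + 1 : ℕ) : ℝ) ≤ 4 * ((k + 1 - ((k + 1) / 2 + 1) : ℕ) : ℝ) := by
    exact_mod_cast (by omega : k + 1 ≤ 4 * (k + 1 - ((k + 1) / 2 + 1)))
  generalize ((k + 1 - ((k + 1) / 2 + 1) : ℕ) : ℝ) = c at hcard hk4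
  push_cast at hk4
  nlinarith

/-- Lemma 1, Part 2 (monotonicity up to errors): if `(λ_j)`, `(a_j)` are nonnegative with
`∑ λ_i a_i < ∞`, `(e_j)` is nonnegative with `a_{k+1} ≤ a_k + e_k` for all `k` and
`∑ Λ_i e_i < ∞`, then (i) `a_k ≤ (1/Λ_k)(∑ λ_i a_i + ∑ Λ_i e_i)` whenever `Λ_k > 0`,
(ii) `(Λ_k − Λ_{⌈k/2⌉}) a_k → 0`; in particular, if `inf λ_j > 0` then `(k+1) a_k → 0`. -/
theorem summable_sequence_rates_monotone_up_to_errors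
    (lam a e : ℕ → ℝ)
    (hlam : ∀ n, 0 ≤ lam n) (ha : ∀ n, 0 ≤ a n) (he : ∀ n, 0 ≤ e n)
    (hsum : Summable (fun i => lam i * a i))
    (hrec : ∀ k, a (k + 1) ≤ a k + e k)
    (hesum : Summable (fun i => (∑ j ∈ Finset.range (i + 1), lam j) * e i)) :
    (∀ k : ℕ, 0 < (∑ i ∈ Finset.range (k + 1), lam i) →
        a k ≤ (1 / ∑ i ∈ Finset.range (k + 1), lam i) *
          ((∑' i, lam i * a i) + ∑' i, (∑ j ∈ Finset.range (i + 1), lam j) * e i)) ∧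
    Filter.Tendsto
      (fun k : ℕ =>
        ((∑ i ∈ Finset.range (k + 1), lam i) -
          ∑ i ∈ Finset.range ((k + 1) / 2 + 1), lam i) * a k)
      Filter.atTop (nhds 0) ∧
    ((∃ ε > (0 : ℝ), ∀ j, ε ≤ lam j) →
      Filter.Tendsto (fun k : ℕ => ((k : ℝ) + 1) * a k) Filter.atTop (nhds 0)) := by
  have hdiff : ∀ k, (∑ i ∈ range (k + 1), lam i) - ∑ i ∈ range ((k + 1) / 2 + 1), lam i =
      ∑ i ∈ Ico ((k + 1) / 2 + 1) (k + 1), lam i := fun k =>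
    (sum_Ico_eq_sub _ (by omega)).symm
  have hhalf := tendsto_sum_Ico_half_mul hlam ha he hsum hrec hesum
  simp_rw [hdiff]
  refine ⟨fun k hk => ?_, hhalf, ?_⟩
  · have hk0 := sum_Ico_mul_le_tsum_tails hlam ha he hsum hrec hesum 0 k
    simp only [Nat.Ico_zero_eq_range, add_zero] at hk0
    rw [one_div, inv_mul_eq_div, le_div_iff₀ hk, mul_comm]
    exact hk0
  · rintro ⟨ε, hε, hlamε⟩
    refine squeeze_zero' (Eventually.of_forall fun k => mul_nonneg (by positivity) (ha k))
      ?_ (by simpa using hhalf.const_mul (4 / ε))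
    filter_upwards [eventually_ge_atTop 2] with k hk
    have hbound := mul_add_one_le_four_mul_sum_Ico_half hε.le hlamε hk
    rw [div_mul_eq_mul_div, le_div_iff₀ hε]
    nlinarith [ha k]
end

section
/- Let (λ_j)_{j≥0}, (a_j)_{j≥0}, (b_j)_{j≥0}, and (e_j)_{j≥0} be nonnegative real sequences such that ∑_{i=0}^∞ b_i < ∞, ∑_{i=0}^∞ (i+1)e_i < ∞, and λ_k a_k ≤ b_k − b_{k+1} + e_k for all k ≥ 0. Then ∑_{i=0}^∞ (i+1) λ_i a_i ≤ ∑_{i=0}^∞ b_i + ∑_{i=0}^∞ (i+1) e_i < ∞. If moreover (a_j) is monotonically nonincreasing and inf_j λ_j > 0, then (k+1)²·a_k → 0 as k → ∞. -/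
/-- Lemma 1, Part 3 (faster rates): if `(λ_j)`, `(a_j)`, `(b_j)`, `(e_j)` are nonnegative with
`∑ b_i < ∞`, `∑ (i+1) e_i < ∞` and `λ_k a_k ≤ b_k − b_{k+1} + e_k` for all `k`, then
`∑ (i+1) λ_i a_i ≤ ∑ b_i + ∑ (i+1) e_i < ∞`; if moreover `(a_j)` is monotonically
nonincreasing and `inf λ_j > 0`, then `(k+1)² a_k → 0`. -/
theorem summable_sequence_rates_faster
    (lam a b e : ℕ → ℝ)
    (hlam : ∀ n, 0 ≤ lam n) (ha : ∀ n, 0 ≤ a n) (hb : ∀ n, 0 ≤ b n) (he : ∀ n, 0 ≤ e n)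
    (hbsum : Summable b)
    (hesum : Summable (fun i : ℕ => ((i : ℝ) + 1) * e i))
    (hrec : ∀ k : ℕ, lam k * a k ≤ b k - b (k + 1) + e k) :
    Summable (fun i : ℕ => ((i : ℝ) + 1) * (lam i * a i)) ∧
    (∑' i : ℕ, ((i : ℝ) + 1) * (lam i * a i)) ≤ (∑' i, b i) + ∑' i : ℕ, ((i : ℝ) + 1) * e i ∧
    (Antitone a → (∃ ε > (0 : ℝ), ∀ j, ε ≤ lam j) →
      Filter.Tendsto (fun k : ℕ => ((k : ℝ) + 1) ^ 2 * a k) Filter.atTop (nhds 0)) := by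
  have hpos : ∀ i : ℕ, 0 ≤ ((i : ℝ) + 1) * (lam i * a i) := fun i =>
    mul_nonneg (by positivity) (mul_nonneg (hlam i) (ha i))
  have hepos : ∀ i : ℕ, 0 ≤ ((i : ℝ) + 1) * e i := fun i =>
    mul_nonneg (by positivity) (he i)
  have abel : ∀ n, ∑ i ∈ Finset.range n, ((i : ℝ) + 1) * (b i - b (i + 1))
      = (∑ i ∈ Finset.range n, b i) - n * b n := by
    intro n
    induction n with
    | zero => simp
    | succ n ih =>
      rw [Finset.sum_range_succ, ih, Finset.sum_range_succ]
      push_cast; ring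
  have key : ∀ n, ∑ i ∈ Finset.range n, ((i : ℝ) + 1) * (lam i * a i)
      ≤ (∑' i, b i) + ∑' i : ℕ, ((i : ℝ) + 1) * e i := by
    intro n
    have h1 : ∑ i ∈ Finset.range n, ((i : ℝ) + 1) * (lam i * a i)
        ≤ ∑ i ∈ Finset.range n, ((i : ℝ) + 1) * ((b i - b (i + 1)) + e i) := by
      refine Finset.sum_le_sum fun i _ => ?_
      have h := hrec i
      have hi : (0 : ℝ) ≤ (i : ℝ) + 1 := by positivity
      have : lam i * a i ≤ (b i - b (i + 1)) + e i := by linarith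
      exact mul_le_mul_of_nonneg_left this hi
    have h2 : ∑ i ∈ Finset.range n, ((i : ℝ) + 1) * ((b i - b (i + 1)) + e i)
        = ((∑ i ∈ Finset.range n, b i) - n * b n)
          + ∑ i ∈ Finset.range n, ((i : ℝ) + 1) * e i := by
      rw [← abel, ← Finset.sum_add_distrib]
      exact Finset.sum_congr rfl fun i _ => by ring
    have h3 : ∑ i ∈ Finset.range n, b i ≤ ∑' i, b i := Summable.sum_le_tsum _ (fun i _ => hb i) hbsum
    have h4 : ∑ i ∈ Finset.range n, ((i : ℝ) + 1) * e i ≤ ∑' i : ℕ, ((i : ℝ) + 1) * e i :=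
      Summable.sum_le_tsum _ (fun i _ => hepos i) hesum
    have h5 : (0 : ℝ) ≤ (n : ℝ) * b n := mul_nonneg (Nat.cast_nonneg n) (hb n)
    linarith
  have hsum1 : Summable (fun i : ℕ => ((i : ℝ) + 1) * (lam i * a i)) :=
    summable_of_sum_range_le hpos key
  refine ⟨hsum1, Summable.tsum_le_of_sum_range_le hsum1 key, ?_⟩
  rintro hanti ⟨ε, hε, hεle⟩
  set F : ℕ → ℝ := fun i => ((i : ℝ) + 1) * a i with hF
  have hFpos : ∀ i, 0 ≤ F i := fun i => mul_nonneg (by positivity) (ha i)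
  have hFsum : Summable F := by
    refine Summable.of_nonneg_of_le hFpos (fun i => ?_) (hsum1.mul_left (1 / ε))
    have h1 : ε * a i ≤ lam i * a i := mul_le_mul_of_nonneg_right (hεle i) (ha i)
    show ((i : ℝ) + 1) * a i ≤ 1 / ε * (((i : ℝ) + 1) * (lam i * a i))
    have hi : (0 : ℝ) ≤ (i : ℝ) + 1 := by positivity
    rw [div_mul_eq_mul_div, le_div_iff₀ hε]
    nlinarith [mul_le_mul_of_nonneg_left h1 hi]
  -- partial sums
  set P : ℕ → ℝ := fun n => ∑ i ∈ Finset.range n, F i with hP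
  have hPtsum : Filter.Tendsto P Filter.atTop (nhds (∑' i, F i)) :=
    hFsum.hasSum.tendsto_sum_nat
  have hhalf : Filter.Tendsto (fun k : ℕ => k / 2) Filter.atTop Filter.atTop := by
    refine Filter.tendsto_atTop_atTop.2 fun m => ⟨2 * m, fun k hk => ?_⟩
    omega
  have hT : Filter.Tendsto (fun k : ℕ => 4 * ((∑' i, F i) - P (k / 2)))
      Filter.atTop (nhds 0) := by
    have h0 : Filter.Tendsto (fun k : ℕ => (∑' i, F i) - P (k / 2)) Filter.atTop
        (nhds ((∑' i, F i) - (∑' i, F i))) :=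
      Filter.Tendsto.sub tendsto_const_nhds (hPtsum.comp hhalf)
    have h1 := h0.const_mul (4 : ℝ)
    simpa using h1
  have hub : ∀ k : ℕ, ((k : ℝ) + 1) ^ 2 * a k ≤ 4 * ((∑' i, F i) - P (k / 2)) := by
    intro k
    set m := k / 2 with hm
    have hmk : m ≤ k := Nat.div_le_self _ _
    -- lower bound for the block sum
    have hblock : ((k : ℝ) + 1 - m) * ((m : ℝ) + 1) * a k ≤ ∑ i ∈ Finset.Icc m k, F i := by
      have hcard : (Finset.Icc m k).card = k + 1 - m := Nat.card_Icc m k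
      have : ∑ i ∈ Finset.Icc m k, ((m : ℝ) + 1) * a k ≤ ∑ i ∈ Finset.Icc m k, F i := by
        refine Finset.sum_le_sum fun i hi => ?_
        rw [Finset.mem_Icc] at hi
        have h1 : (m : ℝ) + 1 ≤ (i : ℝ) + 1 := by
          have := hi.1; push_cast; exact_mod_cast by omega
        have h2 : a k ≤ a i := hanti hi.2
        have := mul_le_mul h1 h2 (ha k) (by positivity : (0:ℝ) ≤ (i:ℝ)+1)
        exact this
      rw [Finset.sum_const, hcard] at this
      have hc : ((k + 1 - m : ℕ) : ℝ) = (k : ℝ) + 1 - m := by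
        push_cast [Nat.cast_sub (by omega : m ≤ k + 1)]; ring
      calc ((k : ℝ) + 1 - m) * ((m : ℝ) + 1) * a k
          = ((k + 1 - m : ℕ) : ℝ) * (((m : ℝ) + 1) * a k) := by rw [hc]; ring
        _ = (k + 1 - m : ℕ) • (((m : ℝ) + 1) * a k) := by rw [nsmul_eq_mul]
        _ ≤ ∑ i ∈ Finset.Icc m k, F i := this
    -- block sum bounded by tail
    have hsplit : P m + ∑ i ∈ Finset.Icc m k, F i = P (k + 1) := by
      have h := Finset.sum_Ico_consecutive F (Nat.zero_le m) (by omega : m ≤ k + 1)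
      simp only [hP, Finset.range_eq_Ico, ← Finset.Ico_add_one_right_eq_Icc]
      exact h
    have htail : ∑ i ∈ Finset.Icc m k, F i ≤ (∑' i, F i) - P m := by
      have hP1 : P (k + 1) ≤ ∑' i, F i := Summable.sum_le_tsum _ (fun i _ => hFpos i) hFsum
      linarith
    -- cast facts about m = k / 2
    have hm1 : (m : ℝ) ≤ (k : ℝ) / 2 := by
      have : 2 * m ≤ k := by omega
      have := (Nat.cast_le (α := ℝ)).2 this
      push_cast at this ⊢
      linarith
    have hm2 : ((k : ℝ) - 1) / 2 ≤ (m : ℝ) := by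
      have : k ≤ 2 * m + 1 := by omega
      have := (Nat.cast_le (α := ℝ)).2 this
      push_cast at this ⊢
      linarith
    have hquad : ((k : ℝ) + 1) ^ 2 / 4 ≤ ((k : ℝ) + 1 - m) * ((m : ℝ) + 1) := by
      nlinarith [mul_nonneg (by linarith : (0:ℝ) ≤ (m : ℝ) - ((k : ℝ) - 1) / 2)
        (by linarith : (0:ℝ) ≤ (k : ℝ) / 2 - (m : ℝ))]
    have hak := ha k
    nlinarith [mul_le_mul_of_nonneg_right hquad hak, hblock, htail]
  refine squeeze_zero (fun k => mul_nonneg (by positivity) (ha k)) hub hT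
end

section
/- Let H be a real Hilbert space, let T : H → H be nonexpansive with a fixed point z*, let (λ_j)_{j≥0} ⊆ (0,1], set τ_k := λ_k(1−λ_k), and define z^{k+1} = (1−λ_k) z^k + λ_k T(z^k) from z^0 ∈ H. If τ_k > 0 for all k, then for every k ≥ 0: ‖T z^k − z^k‖² ≤ ‖z^0 − z*‖² / (∑_{i=0}^k τ_i), and (∑_{i=⌈k/2⌉+1}^{k} τ_i)·‖T z^k − z^k‖² → 0 as k → ∞. In particular, if there is ε > 0 with τ_j ≥ ε for all j, then (k+1)·‖T z^k − z^k‖² → 0 as k → ∞. -/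
/-!
Against the fixed point `z*`, one Krasnosel'skiĭ–Mann step satisfies the Fejér-type descent
`‖z_{k+1} - z*‖² + τ_k ‖T z_k - z_k‖² ≤ ‖z_k - z*‖²`, and the residual `‖T z_k - z_k‖` is
nonincreasing. Summing the descent gives `∑ τ_i ‖T z_i - z_i‖² ≤ ‖z_0 - z*‖²`; since the
residuals decrease, the last one is bounded by every earlier one, which yields the `1/∑ τ_i`
bound, and comparing with the tail `∑_{i > ⌈k/2⌉} τ_i ‖T z_i - z_i‖²` of a convergent series
yields the `o(·)` rate.
-/

open Filter Finset Topology

section RealSequences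

variable {τ r : ℕ → ℝ}

theorem sum_range_le_of_succ_add_le {a b : ℕ → ℝ} (ha : ∀ n, 0 ≤ a n)
    (h : ∀ n, a (n + 1) + b n ≤ a n) (n : ℕ) : ∑ i ∈ range n, b i ≤ a 0 := by
  have htele : ∑ i ∈ range n, b i ≤ ∑ i ∈ range n, (a i - a (i + 1)) :=
    sum_le_sum fun i _ => by linarith [h i]
  rw [sum_range_sub'] at htele
  linarith [ha n]

theorem Summable.tendsto_sum_Ico_zero {f : ℕ → ℝ} (hf : Summable f) {a b : ℕ → ℕ}
    (ha : Tendsto a atTop atTop) (hab : ∀ k, a k ≤ b k) :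
    Tendsto (fun k => ∑ i ∈ Ico (a k) (b k), f i) atTop (𝓝 0) := by
  have hS := hf.hasSum.tendsto_sum_nat
  have hb : Tendsto b atTop atTop := tendsto_atTop_mono hab ha
  simpa [sum_Ico_eq_sub _ (hab _)] using (hS.comp hb).sub (hS.comp ha)

theorem sum_mul_le_sum_mul_of_antitone (hτ : ∀ i, 0 ≤ τ i) (hr : Antitone r)
    {s : Finset ℕ} {k : ℕ} (hs : ∀ i ∈ s, i ≤ k) :
    (∑ i ∈ s, τ i) * r k ≤ ∑ i ∈ s, τ i * r i := by
  rw [sum_mul]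
  exact sum_le_sum fun i hi => mul_le_mul_of_nonneg_left (hr (hs i hi)) (hτ i)

theorem tendsto_sum_Icc_half_mul_of_antitone (hτ : ∀ i, 0 ≤ τ i) (hr₀ : ∀ i, 0 ≤ r i)
    (hr : Antitone r) {C : ℝ} (hC : ∀ n, ∑ i ∈ range n, τ i * r i ≤ C) :
    Tendsto (fun k => (∑ i ∈ Icc ((k + 1) / 2 + 1) k, τ i) * r k) atTop (𝓝 0) := by
  have hsum : Summable fun i => τ i * r i :=
    summable_of_sum_range_le (fun i => mul_nonneg (hτ i) (hr₀ i)) hC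
  have htail := hsum.tendsto_sum_Ico_zero (a := fun k => (k + 1) / 2 + 1) (b := fun k => k + 1)
    (tendsto_atTop_atTop.2 fun n => ⟨2 * n, fun k hk => by omega⟩) (fun k => by omega)
  simp only [Finset.Ico_add_one_right_eq_Icc] at htail
  exact squeeze_zero (fun k => mul_nonneg (sum_nonneg fun i _ => hτ i) (hr₀ k))
    (fun k => sum_mul_le_sum_mul_of_antitone hτ hr fun i hi => (mem_Icc.1 hi).2) htail

/-- Once `τ ≥ ε`, the window `(⌈k/2⌉, k]` carries weight at least `ε (k + 1) / 4` for `k ≥ 2`. -/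
theorem tendsto_succ_mul_of_tendsto_sum_Icc_half_mul {ε : ℝ} (hε : 0 < ε) (hτ : ∀ i, ε ≤ τ i)
    (hr₀ : ∀ i, 0 ≤ r i)
    (h : Tendsto (fun k => (∑ i ∈ Icc ((k + 1) / 2 + 1) k, τ i) * r k) atTop (𝓝 0)) :
    Tendsto (fun k : ℕ => ((k : ℝ) + 1) * r k) atTop (𝓝 0) := by
  refine squeeze_zero' (Eventually.of_forall fun k => mul_nonneg (by positivity) (hr₀ k))
    (eventually_atTop.2 ⟨2, fun k hk => ?_⟩) (by simpa using h.const_mul (4 / ε))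
  set s := Icc ((k + 1) / 2 + 1) k
  have hcard : (k : ℝ) + 1 ≤ 4 * #s := by
    rw [Nat.card_Icc]
    exact_mod_cast (by omega : k + 1 ≤ 4 * (k + 1 - ((k + 1) / 2 + 1)))
  have hweight : #s * ε ≤ ∑ i ∈ s, τ i := by
    simpa [nsmul_eq_mul] using card_nsmul_le_sum s τ ε fun i _ => hτ i
  calc ((k : ℝ) + 1) * r k ≤ 4 * #s * r k := by gcongr; exact hr₀ k
    _ = 4 / ε * (#s * ε * r k) := by field_simp
    _ ≤ 4 / ε * ((∑ i ∈ s, τ i) * r k) := by gcongr; exact hr₀ k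

end RealSequences

section KrasnoselskiiMann

variable {H : Type*} [NormedAddCommGroup H] [InnerProductSpace ℝ H]

theorem norm_one_sub_smul_add_smul_sq (a b : H) (t : ℝ) :
    ‖(1 - t) • a + t • b‖ ^ 2 = (1 - t) * ‖a‖ ^ 2 + t * ‖b‖ ^ 2 - t * (1 - t) * ‖a - b‖ ^ 2 := by
  rw [norm_add_sq_real, norm_sub_sq_real]
  simp only [norm_smul, mul_pow, Real.norm_eq_abs, sq_abs, real_inner_smul_left,
    real_inner_smul_right]
  ring

variable {T : H → H} (hT : ∀ x y, ‖T x - T y‖ ≤ ‖x - y‖)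
include hT

theorem norm_km_step_sub_fixedPoint_sq_add_le {p : H} (hp : T p = p) {t : ℝ} (ht : 0 ≤ t)
    (x : H) :
    ‖(1 - t) • x + t • T x - p‖ ^ 2 + t * (1 - t) * ‖T x - x‖ ^ 2 ≤ ‖x - p‖ ^ 2 := by
  have hsplit : (1 - t) • x + t • T x - p = (1 - t) • (x - p) + t • (T x - p) := by module
  have hTx : ‖T x - p‖ ^ 2 ≤ ‖x - p‖ ^ 2 := by
    gcongr
    simpa [hp] using hT x p
  rw [hsplit, norm_one_sub_smul_add_smul_sq, sub_sub_sub_cancel_right, norm_sub_rev x (T x)]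
  nlinarith [mul_le_mul_of_nonneg_left hTx ht]

theorem norm_km_step_residual_le {t : ℝ} (ht₀ : 0 ≤ t) (ht₁ : t ≤ 1) (x : H) :
    ‖T ((1 - t) • x + t • T x) - ((1 - t) • x + t • T x)‖ ≤ ‖T x - x‖ := by
  set y := (1 - t) • x + t • T x
  have hy : y - x = t • (T x - x) := by module
  calc ‖T y - y‖ = ‖(T y - T x) + (1 - t) • (T x - x)‖ := by congr 1; module
    _ ≤ ‖y - x‖ + (1 - t) * ‖T x - x‖ := by
      grw [norm_add_le, hT, norm_smul, Real.norm_of_nonneg (sub_nonneg.2 ht₁)]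
    _ = ‖T x - x‖ := by
      rw [hy, norm_smul, Real.norm_of_nonneg ht₀]
      ring

end KrasnoselskiiMann

theorem km_iteration_fpr_rate_general
    {H : Type*} [NormedAddCommGroup H] [InnerProductSpace ℝ H]
    (T : H → H) (hT : ∀ x y : H, ‖T x - T y‖ ≤ ‖x - y‖)
    (zstar : H) (hzstar : T zstar = zstar)
    (lam : ℕ → ℝ) (hlam : ∀ k, lam k ∈ Set.Ioc (0 : ℝ) 1)
    (htau : ∀ k, 0 < lam k * (1 - lam k))
    (z : ℕ → H) (hz : ∀ k, z (k + 1) = (1 - lam k) • z k + lam k • T (z k)) :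
    (∀ k : ℕ, ‖T (z k) - z k‖ ^ 2 ≤
        ‖z 0 - zstar‖ ^ 2 / ∑ i ∈ Finset.range (k + 1), lam i * (1 - lam i)) ∧
    Filter.Tendsto
      (fun k : ℕ =>
        (∑ i ∈ Finset.Icc ((k + 1) / 2 + 1) k, lam i * (1 - lam i)) * ‖T (z k) - z k‖ ^ 2)
      Filter.atTop (nhds 0) ∧
    ((∃ ε > (0 : ℝ), ∀ j, ε ≤ lam j * (1 - lam j)) →
      Filter.Tendsto (fun k : ℕ => ((k : ℝ) + 1) * ‖T (z k) - z k‖ ^ 2)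
        Filter.atTop (nhds 0)) := by
  have hr₀ : ∀ k, 0 ≤ ‖T (z k) - z k‖ ^ 2 := fun k => sq_nonneg _
  have hr : Antitone fun k => ‖T (z k) - z k‖ ^ 2 := antitone_nat_of_succ_le fun k => by
    simp only [hz]
    gcongr
    exact norm_km_step_residual_le hT (hlam k).1.le (hlam k).2 (z k)
  have hC : ∀ n, ∑ i ∈ range n, lam i * (1 - lam i) * ‖T (z i) - z i‖ ^ 2 ≤ ‖z 0 - zstar‖ ^ 2 :=
    sum_range_le_of_succ_add_le (a := fun n => ‖z n - zstar‖ ^ 2) (fun _ => sq_nonneg _)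
      fun k => hz k ▸ norm_km_step_sub_fixedPoint_sq_add_le hT hzstar (hlam k).1.le (z k)
  have hτ : ∀ k, 0 ≤ lam k * (1 - lam k) := fun k => (htau k).le
  have hhalf := tendsto_sum_Icc_half_mul_of_antitone hτ hr₀ hr hC
  refine ⟨fun k => ?_, hhalf, fun ⟨ε, hε, hετ⟩ =>
    tendsto_succ_mul_of_tendsto_sum_Icc_half_mul hε hετ hr₀ hhalf⟩
  rw [le_div_iff₀ (sum_pos (fun i _ => htau i) nonempty_range_add_one), mul_comm]
  exact (sum_mul_le_sum_mul_of_antitone hτ hr fun i hi => mem_range_succ_iff.1 hi).trans (hC _)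

/-- Theorem 1 (convergence of averaged operators), part 4: for a nonexpansive
`T : H → H` with fixed point `z*`, `λ_k ∈ (0,1]`, `τ_k := λ_k(1−λ_k) > 0`, and KM
iterates `z^{k+1} = (1−λ_k) z^k + λ_k T z^k`, we have for all `k`
`‖T z^k − z^k‖² ≤ ‖z^0 − z*‖² / ∑_{i=0}^k τ_i`, and
`(∑_{i=⌈k/2⌉+1}^k τ_i)·‖T z^k − z^k‖² → 0`; in particular if `τ_j ≥ ε > 0` for all `j`
then `(k+1)·‖T z^k − z^k‖² → 0`. -/
theorem km_iteration_fpr_rate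
    {H : Type*} [NormedAddCommGroup H] [InnerProductSpace ℝ H] [CompleteSpace H]
    (T : H → H) (hT : ∀ x y : H, ‖T x - T y‖ ≤ ‖x - y‖)
    (zstar : H) (hzstar : T zstar = zstar)
    (lam : ℕ → ℝ) (hlam : ∀ k, lam k ∈ Set.Ioc (0 : ℝ) 1)
    (htau : ∀ k, 0 < lam k * (1 - lam k))
    (z : ℕ → H) (hz : ∀ k, z (k + 1) = (1 - lam k) • z k + lam k • T (z k)) :
    (∀ k : ℕ, ‖T (z k) - z k‖ ^ 2 ≤
        ‖z 0 - zstar‖ ^ 2 / ∑ i ∈ Finset.range (k + 1), lam i * (1 - lam i)) ∧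
    Filter.Tendsto
      (fun k : ℕ =>
        (∑ i ∈ Finset.Icc ((k + 1) / 2 + 1) k, lam i * (1 - lam i)) * ‖T (z k) - z k‖ ^ 2)
      Filter.atTop (nhds 0) ∧
    ((∃ ε > (0 : ℝ), ∀ j, ε ≤ lam j * (1 - lam j)) →
      Filter.Tendsto (fun k : ℕ => ((k : ℝ) + 1) * ‖T (z k) - z k‖ ^ 2)
        Filter.atTop (nhds 0)) :=
  km_iteration_fpr_rate_general T hT zstar hzstar lam hlam htau z hz
end

section
/- Let H be a real Hilbert space, let T : H → H be nonexpansive with a fixed point z*, let (λ_j)_{j≥0} ⊆ (0,1], set τ_k := λ_k(1−λ_k), and suppose there is ε > 0 with τ_j ≥ ε for all j. Let (e^j)_{j≥0} ⊆ H be an error sequence with ∑_{i=0}^∞ λ_i ‖e^i‖ < ∞ and ∑_{i=0}^∞ (i+1) λ_i² ‖e^i‖² < ∞, and define the inexact Krasnosel'skiĭ–Mann iterates z^{k+1} = (1−λ_k) z^k + λ_k (T(z^k) + e^k) from z^0 ∈ H. Then (k+1)·‖T z^k − z^k‖² → 0 as k → ∞. -/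
/-!
The relaxation `R x = x + λ (T x - x)` of a nonexpansive `T` satisfies
`‖R x - R y‖² ≤ ‖x - y‖² - λ(1-λ) ‖(T x - x) - (T y - y)‖²`. At `y = z*` this makes
`‖z^k - z*‖` quasi-Fejér, hence bounded, and the residuals `h_k = ‖T z^k - z^k‖²` summable;
at `x = z^{k+1}`, `y = z^k` it gives `h_{k+1} ≤ h_k + λ_k² ‖e^k‖² / ε`. So
`h_k + ∑_{j ≥ k} λ_j² ‖e^j‖² / ε` is antitone, and it is summable because
`∑ (j + 1) λ_j² ‖e^j‖² < ∞`; an antitone summable sequence is `o(1/k)`.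
-/

open Filter Finset Topology

theorem le_add_tsum_of_succ_le_add {u b : ℕ → ℝ} (hb0 : ∀ k, 0 ≤ b k) (hb : Summable b)
    (h : ∀ k, u (k + 1) ≤ u k + b k) (n : ℕ) : u n ≤ u 0 + ∑' k, b k := by
  have partial_sums : u n ≤ u 0 + ∑ k ∈ range n, b k := by
    induction n with
    | zero => simp
    | succ n ih => rw [sum_range_succ]; linarith [h n]
  linarith [hb.sum_le_tsum (range n) fun k _ => hb0 k]

theorem summable_of_le_sub_succ_add {a d b : ℕ → ℝ} (ha : ∀ k, 0 ≤ a k) (hd : ∀ k, 0 ≤ d k)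
    (hb0 : ∀ k, 0 ≤ b k) (hb : Summable b) (h : ∀ k, a k ≤ d k - d (k + 1) + b k) :
    Summable a := by
  refine summable_of_sum_range_le (c := d 0 + ∑' k, b k) ha fun n => ?_
  calc ∑ k ∈ range n, a k ≤ ∑ k ∈ range n, (d k - d (k + 1) + b k) := sum_le_sum fun k _ => h k
    _ = d 0 - d n + ∑ k ∈ range n, b k := by rw [sum_add_distrib, sum_range_sub']
    _ ≤ d 0 + ∑' k, b k := by linarith [hd n, hb.sum_le_tsum (range n) fun k _ => hb0 k]

/-- `∑ₖ ∑_{j ≥ k} f j = ∑ⱼ (j + 1) f j`, summing over the antidiagonals of `ℕ × ℕ`. -/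
theorem summable_tsum_nat_add_of_summable_mul {f : ℕ → ℝ} (hf : ∀ n, 0 ≤ f n)
    (h : Summable fun n : ℕ => ((n : ℝ) + 1) * f n) : Summable fun k => ∑' j, f (j + k) := by
  have hprod : Summable fun p : ℕ × ℕ => f (p.2 + p.1) := by
    rw [← (HasAntidiagonal.sigmaAntidiagonalEquivProd (A := ℕ)).summable_iff]
    refine (summable_sigma_of_nonneg fun _ => hf _).2
      ⟨fun _ => Summable.of_finite, h.congr fun n => ?_⟩
    have hdiag : ∀ p : antidiagonal n, f (p.1.2 + p.1.1) = f n := fun p => by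
      rw [add_comm, mem_antidiagonal.1 p.2]
    simp [hdiag, tsum_fintype, Finset.Nat.card_antidiagonal]
  exact ((summable_prod_of_nonneg fun _ => hf _).1 hprod).2

theorem Antitone.tendsto_mul_of_summable {f : ℕ → ℝ} (hf : Antitone f) (hs : Summable f) :
    Tendsto (fun n : ℕ => ((n : ℝ) + 1) * f n) atTop (𝓝 0) := by
  have hf0 : ∀ n, 0 ≤ f n := hf.le_of_tendsto hs.tendsto_atTop_zero
  -- The `n + 1 - n / 2` terms `f (n / 2), …, f n` of the tail from `n / 2` are all `≥ f n`.
  have hbound : ∀ n : ℕ, ((n : ℝ) + 1) * f n ≤ 2 * ∑' j, f (j + n / 2) := fun n => by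
    have hcard : ((n : ℝ) + 1) ≤ 2 * ((n + 1 - n / 2 : ℕ) : ℝ) := by
      exact_mod_cast (by omega : n + 1 ≤ 2 * (n + 1 - n / 2))
    have htail : ((n + 1 - n / 2 : ℕ) : ℝ) * f n ≤ ∑' j, f (j + n / 2) :=
      calc ((n + 1 - n / 2 : ℕ) : ℝ) * f n = ∑ j ∈ range (n + 1 - n / 2), f n := by simp
        _ ≤ ∑ j ∈ range (n + 1 - n / 2), f (j + n / 2) :=
          sum_le_sum fun j hj => hf (by rw [mem_range] at hj; omega)
        _ ≤ ∑' j, f (j + n / 2) :=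
          ((summable_nat_add_iff _).2 hs).sum_le_tsum _ fun j _ => hf0 _
    nlinarith [hf0 n]
  have htail : Tendsto (fun n : ℕ => 2 * ∑' j, f (j + n / 2)) atTop (𝓝 0) := by
    simpa using ((tendsto_sum_nat_add f).comp (Nat.tendsto_div_const_atTop two_ne_zero)).const_mul 2
  exact squeeze_zero (fun n => mul_nonneg (by positivity) (hf0 n)) hbound htail

theorem tendsto_mul_of_succ_le_add {h ξ : ℕ → ℝ} (hh0 : ∀ k, 0 ≤ h k) (hξ0 : ∀ k, 0 ≤ ξ k)
    (hrec : ∀ k, h (k + 1) ≤ h k + ξ k) (hh : Summable h)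
    (hξ : Summable fun k : ℕ => ((k : ℝ) + 1) * ξ k) :
    Tendsto (fun k : ℕ => ((k : ℝ) + 1) * h k) atTop (𝓝 0) := by
  set w : ℕ → ℝ := fun k => h k + ∑' j, ξ (j + k)
  have hξs : Summable ξ := Summable.of_nonneg_of_le hξ0
    (fun k => le_mul_of_one_le_left (hξ0 k) (by simp)) hξ
  have hw : Antitone w := antitone_nat_of_succ_le fun k => by
    have hsplit : ∑' j, ξ (j + k) = ξ k + ∑' j, ξ (j + (k + 1)) := by
      rw [((summable_nat_add_iff k).2 hξs).tsum_eq_zero_add]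
      simp only [zero_add, add_right_comm _ 1 k, add_assoc]
    simp only [w, hsplit]
    linarith [hrec k]
  have hhw : ∀ k : ℕ, ((k : ℝ) + 1) * h k ≤ ((k : ℝ) + 1) * w k := fun k =>
    mul_le_mul_of_nonneg_left (le_add_of_nonneg_right (tsum_nonneg fun j => hξ0 _)) (by positivity)
  exact squeeze_zero (fun k => mul_nonneg (by positivity) (hh0 k)) hhw
    (hw.tendsto_mul_of_summable (hh.add (summable_tsum_nat_add_of_summable_mul hξ0 hξ)))

section Hilbert

variable {H : Type*} [NormedAddCommGroup H] [InnerProductSpace ℝ H]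

theorem norm_add_smul_sub_sq (l : ℝ) (u v : H) :
    ‖u + l • (v - u)‖ ^ 2 = (1 - l) * ‖u‖ ^ 2 + l * ‖v‖ ^ 2 - l * (1 - l) * ‖v - u‖ ^ 2 := by
  simp only [← real_inner_self_eq_norm_sq, inner_add_left, inner_add_right, inner_sub_left,
    inner_sub_right, real_inner_smul_left, real_inner_smul_right, real_inner_comm u v]
  ring

theorem norm_relax_sub_relax_sq_le {T : H → H} (hT : ∀ x y, ‖T x - T y‖ ≤ ‖x - y‖) {l : ℝ}
    (hl : 0 ≤ l) (x y : H) :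
    ‖(x + l • (T x - x)) - (y + l • (T y - y))‖ ^ 2
      ≤ ‖x - y‖ ^ 2 - l * (1 - l) * ‖(T x - x) - (T y - y)‖ ^ 2 := by
  have hsplit : (x + l • (T x - x)) - (y + l • (T y - y))
      = (x - y) + l • ((T x - T y) - (x - y)) := by
    simp only [smul_sub]; abel
  have hres : (T x - T y) - (x - y) = (T x - x) - (T y - y) := by abel
  rw [hsplit, norm_add_smul_sub_sq, hres]
  have := pow_le_pow_left₀ (norm_nonneg _) (hT x y) 2
  nlinarith

theorem norm_relax_sub_fixed_le {T : H → H} (hT : ∀ x y, ‖T x - T y‖ ≤ ‖x - y‖) {p : H}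
    (hp : T p = p) {l : ℝ} (hl : 0 ≤ l) (hτ : 0 ≤ l * (1 - l)) (x : H) :
    ‖x + l • (T x - x) - p‖ ^ 2 ≤ ‖x - p‖ ^ 2 - l * (1 - l) * ‖T x - x‖ ^ 2 ∧
      ‖x + l • (T x - x) - p‖ ≤ ‖x - p‖ := by
  have hsq := norm_relax_sub_relax_sq_le hT hl x p
  simp only [hp, sub_self, smul_zero, add_zero, sub_zero] at hsq
  refine ⟨hsq, pow_le_pow_iff_left₀ (norm_nonneg _) (norm_nonneg _) two_ne_zero |>.1 ?_⟩
  nlinarith [sq_nonneg ‖T x - x‖]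

theorem sq_norm_sub_sq_norm_le_of_perturbed {a b e : H} {c d : ℝ} (hc : 0 < c) (hd : 0 < d)
    (h : d * ‖b + e‖ ^ 2 + c * ‖b - a‖ ^ 2 ≤ d * ‖a + e‖ ^ 2) :
    ‖b‖ ^ 2 - ‖a‖ ^ 2 ≤ d * ‖e‖ ^ 2 / c := by
  have hexpand : ‖b + e‖ ^ 2 - ‖a + e‖ ^ 2 = ‖b‖ ^ 2 - ‖a‖ ^ 2 + 2 * inner ℝ (b - a) e := by
    rw [norm_add_sq_real, norm_add_sq_real, inner_sub_left]; ring
  have hcs : -inner ℝ (b - a) e ≤ ‖b - a‖ * ‖e‖ :=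
    (neg_le_abs _).trans (abs_real_inner_le_norm _ _)
  have hgap : d * (‖b‖ ^ 2 - ‖a‖ ^ 2) ≤ 2 * d * (‖b - a‖ * ‖e‖) - c * ‖b - a‖ ^ 2 := by
    nlinarith [mul_le_mul_of_nonneg_left hcs hd.le]
  -- AM-GM: `2 c d ‖b - a‖ ‖e‖ - c² ‖b - a‖² ≤ d² ‖e‖²`
  have hamgm : c * (d * (‖b‖ ^ 2 - ‖a‖ ^ 2)) ≤ d * (d * ‖e‖ ^ 2) := by
    nlinarith [sq_nonneg (c * ‖b - a‖ - d * ‖e‖), mul_le_mul_of_nonneg_left hgap hc.le]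
  rw [le_div_iff₀ hc]
  nlinarith

end Hilbert

namespace InexactKM

variable {H : Type*} [NormedAddCommGroup H] [InnerProductSpace ℝ H] {T : H → H}
  {lam : ℕ → ℝ} {e z : ℕ → H}

theorem succ_eq (hz : ∀ k, z (k + 1) = (1 - lam k) • z k + lam k • (T (z k) + e k)) (k : ℕ) :
    z (k + 1) = z k + lam k • (T (z k) - z k) + lam k • e k := by
  rw [hz k, smul_add, smul_sub, sub_smul, one_smul]; abel

theorem norm_sq_residual_succ_le (hT : ∀ x y, ‖T x - T y‖ ≤ ‖x - y‖)
    (hz : ∀ k, z (k + 1) = (1 - lam k) • z k + lam k • (T (z k) + e k)) {k : ℕ}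
    (hl : 0 ≤ lam k) (hτ : 0 < lam k * (1 - lam k)) :
    ‖T (z (k + 1)) - z (k + 1)‖ ^ 2
      ≤ ‖T (z k) - z k‖ ^ 2 + lam k ^ 2 * ‖e k‖ ^ 2 / (lam k * (1 - lam k)) := by
  set l := lam k
  set G := T (z k) - z k
  set G' := T (z (k + 1)) - z (k + 1)
  have hl0 : 0 < l := hl.lt_of_ne (by rintro h; simp [← h] at hτ)
  have hstep : z (k + 1) - z k = l • (G + e k) := by rw [succ_eq hz, smul_add]; abel
  have hrelax : z (k + 1) + l • G' - (z k + l • G) = l • (G' + e k) := by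
    rw [succ_eq hz, smul_add]; abel
  have hsq (v : H) : ‖l • v‖ ^ 2 = l ^ 2 * ‖v‖ ^ 2 := by
    rw [norm_smul, Real.norm_eq_abs, mul_pow, sq_abs]
  have hmain := norm_relax_sub_relax_sq_le hT hl (z (k + 1)) (z k)
  rw [hrelax, hstep, hsq, hsq] at hmain
  have := sq_norm_sub_sq_norm_le_of_perturbed (a := G) (b := G') (e := e k) hτ (pow_pos hl0 2)
    (by linarith)
  linarith

theorem norm_succ_sub_le (hz : ∀ k, z (k + 1) = (1 - lam k) • z k + lam k • (T (z k) + e k))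
    {k : ℕ} (hl : 0 ≤ lam k) (p : H) :
    ‖z (k + 1) - p‖ ≤ ‖z k + lam k • (T (z k) - z k) - p‖ + lam k * ‖e k‖ := by
  have hsplit : z (k + 1) - p = (z k + lam k • (T (z k) - z k) - p) + lam k • e k := by
    rw [succ_eq hz]; abel
  rw [hsplit]
  refine (norm_add_le _ _).trans_eq ?_
  rw [norm_smul, Real.norm_eq_abs, abs_of_nonneg hl]

theorem summable_residual_sq (hT : ∀ x y, ‖T x - T y‖ ≤ ‖x - y‖)
    (hz : ∀ k, z (k + 1) = (1 - lam k) • z k + lam k • (T (z k) + e k)) {p : H} (hp : T p = p)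
    (hl : ∀ k, 0 ≤ lam k) {ε : ℝ} (hε : 0 < ε) (hτ : ∀ k, ε ≤ lam k * (1 - lam k))
    (he1 : Summable fun k => lam k * ‖e k‖) (he2 : Summable fun k => lam k ^ 2 * ‖e k‖ ^ 2) :
    Summable fun k => ‖T (z k) - z k‖ ^ 2 := by
  have hfixed k := norm_relax_sub_fixed_le hT hp (hl k) (hε.le.trans (hτ k)) (z k)
  have hnext k := norm_succ_sub_le hz (hl k) p
  have herr k : 0 ≤ lam k * ‖e k‖ := mul_nonneg (hl k) (norm_nonneg _)
  set M := ‖z 0 - p‖ + ∑' k, lam k * ‖e k‖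
  have hbdd : ∀ k, ‖z k - p‖ ≤ M :=
    le_add_tsum_of_succ_le_add herr he1 fun k => by linarith [hnext k, (hfixed k).2]
  have hfejer k : ε * ‖T (z k) - z k‖ ^ 2 ≤ ‖z k - p‖ ^ 2 - ‖z (k + 1) - p‖ ^ 2
      + (2 * M * (lam k * ‖e k‖) + lam k ^ 2 * ‖e k‖ ^ 2) := by
    nlinarith [hfixed k, hnext k, hbdd k, herr k, norm_nonneg (z (k + 1) - p),
      mul_le_mul_of_nonneg_right (hτ k) (sq_nonneg ‖T (z k) - z k‖)]
  have hM : 0 ≤ M := (norm_nonneg _).trans (hbdd 0)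
  have hsum := summable_of_le_sub_succ_add (fun k => mul_nonneg hε.le (sq_nonneg _))
    (fun k => sq_nonneg _) (fun k => add_nonneg (mul_nonneg (by positivity) (herr k)) (by positivity))
    ((he1.mul_left (2 * M)).add he2) hfejer
  exact (hsum.mul_left ε⁻¹).congr fun k => by field_simp

end InexactKM

theorem inexact_km_iteration_fpr_rate_general
    {H : Type*} [NormedAddCommGroup H] [InnerProductSpace ℝ H]
    (T : H → H) (hT : ∀ x y : H, ‖T x - T y‖ ≤ ‖x - y‖)
    (zstar : H) (hzstar : T zstar = zstar)
    (lam : ℕ → ℝ) (hlam : ∀ k, lam k ∈ Set.Ioc (0 : ℝ) 1)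
    (ε : ℝ) (hε : 0 < ε) (htau : ∀ j, ε ≤ lam j * (1 - lam j))
    (e : ℕ → H)
    (he1 : Summable (fun i : ℕ => lam i * ‖e i‖))
    (he2 : Summable (fun i : ℕ => ((i : ℝ) + 1) * lam i ^ 2 * ‖e i‖ ^ 2))
    (z : ℕ → H) (hz : ∀ k, z (k + 1) = (1 - lam k) • z k + lam k • (T (z k) + e k)) :
    Filter.Tendsto (fun k : ℕ => ((k : ℝ) + 1) * ‖T (z k) - z k‖ ^ 2)
      Filter.atTop (nhds 0) := by
  have hl k : 0 ≤ lam k := (hlam k).1.le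
  have herr2 : Summable fun k => lam k ^ 2 * ‖e k‖ ^ 2 :=
    Summable.of_nonneg_of_le (fun k => by positivity)
      (fun k => by rw [mul_assoc]; exact le_mul_of_one_le_left (by positivity) (by simp)) he2
  refine tendsto_mul_of_succ_le_add (ξ := fun k => lam k ^ 2 * ‖e k‖ ^ 2 / ε)
    (fun k => sq_nonneg _) (fun k => by positivity) (fun k => ?_)
    (InexactKM.summable_residual_sq hT hz hzstar hl hε htau he1 herr2)
    ((he2.div_const ε).congr fun k => by ring)
  calc ‖T (z (k + 1)) - z (k + 1)‖ ^ 2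
      ≤ ‖T (z k) - z k‖ ^ 2 + lam k ^ 2 * ‖e k‖ ^ 2 / (lam k * (1 - lam k)) :=
        InexactKM.norm_sq_residual_succ_le hT hz (hl k) (hε.trans_le (htau k))
    _ ≤ ‖T (z k) - z k‖ ^ 2 + lam k ^ 2 * ‖e k‖ ^ 2 / ε := by gcongr; exact htau k

/-- Theorem 1, part 5 (inexact KM iteration): for nonexpansive `T` with fixed point `z*`,
`λ_k ∈ (0,1]` with `τ_k = λ_k(1−λ_k) ≥ ε > 0`, errors `(e^j) ⊆ H` with
`∑ λ_i ‖e^i‖ < ∞` and `∑ (i+1) λ_i² ‖e^i‖² < ∞`, the inexact KM iterates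
`z^{k+1} = (1−λ_k) z^k + λ_k (T z^k + e^k)` satisfy `(k+1)·‖T z^k − z^k‖² → 0`. -/
theorem inexact_km_iteration_fpr_rate
    {H : Type*} [NormedAddCommGroup H] [InnerProductSpace ℝ H] [CompleteSpace H]
    (T : H → H) (hT : ∀ x y : H, ‖T x - T y‖ ≤ ‖x - y‖)
    (zstar : H) (hzstar : T zstar = zstar)
    (lam : ℕ → ℝ) (hlam : ∀ k, lam k ∈ Set.Ioc (0 : ℝ) 1)
    (ε : ℝ) (hε : 0 < ε) (htau : ∀ j, ε ≤ lam j * (1 - lam j))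
    (e : ℕ → H)
    (he1 : Summable (fun i : ℕ => lam i * ‖e i‖))
    (he2 : Summable (fun i : ℕ => ((i : ℝ) + 1) * lam i ^ 2 * ‖e i‖ ^ 2))
    (z : ℕ → H) (hz : ∀ k, z (k + 1) = (1 - lam k) • z k + lam k • (T (z k) + e k)) :
    Filter.Tendsto (fun k : ℕ => ((k : ℝ) + 1) * ‖T (z k) - z k‖ ^ 2)
      Filter.atTop (nhds 0) :=
  inexact_km_iteration_fpr_rate_general T hT zstar hzstar lam hlam ε hε htau e he1 he2 z hz
end

section
/- Let H be a real Hilbert space, let f : H → ℝ ∪ {∞} be closed, proper, convex, and let g : H → ℝ be convex and Fréchet differentiable with ∇g Lipschitz with constant 1/β (β > 0). Let 0 < γ < 2β, let x* be a minimizer of f + g, and define the forward–backward iterates z^{k+1} = prox_{γf}(z^k − γ∇g(z^k)) from z^0 in the effective domain of f + g. Then for all k ≥ 0: if γ ≤ β, f(z^{k+1}) + g(z^{k+1}) − f(x*) − g(x*) ≤ ‖z^0 − x*‖²/(2γ(k+1)); in general, f(z^{k+1}) + g(z^{k+1}) − f(x*) − g(x*) ≤ (1/(2γ) + (1/(2β)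 − 1/(2γ))·α/(1−α))·‖z^0 − x*‖²/(k+1), where α := 2β/(4β − γ). Moreover (k+1)·(f(z^{k+1}) + g(z^{k+1}) − f(x*) − g(x*)) → 0 as k → ∞. -/
/-!
The prox step makes `(z k - γ ∇g (z k) - z (k + 1)) / γ` a subgradient of `f` at `z (k + 1)`,
and optimality makes `-∇g x*` one at `x*`. Together with convexity of `g`, the descent lemma for
the `1 / β`-Lipschitz gradient and Baillon–Haddad cocoercivity, this gives, for `F = f + g`,
`R k = ‖z k - x*‖²` and `D k = ‖z (k + 1) - z k‖²`, the one-step bound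
`F (z (k+1)) - F x* ≤ (R k - R (k+1)) / (2γ) + (1/(2β) - 1/(2γ)) D k`, the monotonicity of
`F (z k)`, and the Fejér inequality `2β R (k+1) + (2β - γ) D k ≤ 2β R k`. Telescoping bounds
the partial sums of the gaps by `C R 0`: the `D`-term has a nonpositive coefficient when
`γ ≤ β` and is controlled by the summed Fejér inequality otherwise. A nonincreasing sequence
with bounded partial sums is `O(1/k)`, and, being summable, `o(1/k)`.
-/

open RealInnerProductSpace Filter Topology Set Finset

theorem sum_range_le_sub_of_add_le {e R : ℕ → ℝ} (h : ∀ k, e k + R (k + 1) ≤ R k) (n : ℕ) :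
    ∑ i ∈ range n, e i ≤ R 0 - R n := by
  rw [← sum_range_sub']
  exact sum_le_sum fun k _ => by linarith [h k]

theorem Antitone.le_div_of_sum_range_le {a : ℕ → ℝ} (ha : Antitone a) {B : ℝ}
    (hsum : ∀ n, ∑ i ∈ range n, a i ≤ B) (n : ℕ) : a n ≤ B / (n + 1) := by
  rw [le_div_iff₀ (by positivity), mul_comm]
  have hcard := card_nsmul_le_sum (range (n + 1)) a (a n) fun i hi =>
    ha (Nat.lt_succ_iff.1 (mem_range.1 hi))
  rw [card_range, nsmul_eq_mul] at hcard
  push_cast at hcard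
  exact hcard.trans (hsum _)

theorem Antitone.tendsto_natCast_mul_atTop_zero {a : ℕ → ℝ} (ha : Antitone a) (hs : Summable a) :
    Tendsto (fun n : ℕ => (n : ℝ) * a n) atTop (𝓝 0) := by
  have h0 : ∀ n, 0 ≤ a n := ha.le_of_tendsto hs.tendsto_atTop_zero
  -- the `n - n / 2 ≥ n / 2` terms of index in `[n / 2, n)` all dominate `a n`
  have hbound (n : ℕ) : (n : ℝ) * a n ≤ 2 * ∑' k, a (k + n / 2) := by
    have hhalf : (n : ℝ) ≤ 2 * ((n - n / 2 : ℕ) : ℝ) := by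
      rw [Nat.cast_sub (Nat.div_le_self n 2)]
      have : ((n / 2 : ℕ) : ℝ) ≤ n / 2 := Nat.cast_div_le
      linarith
    have htail : ∑ k ∈ range (n - n / 2), a n ≤ ∑ k ∈ range (n - n / 2), a (k + n / 2) :=
      sum_le_sum fun k hk => ha (by have := mem_range.1 hk; omega)
    have hsum := ((summable_nat_add_iff (n / 2)).2 hs).sum_le_tsum (range (n - n / 2))
      fun k _ => h0 _
    rw [sum_const, card_range, nsmul_eq_mul] at htail
    nlinarith [h0 n]
  refine squeeze_zero (fun n => mul_nonneg n.cast_nonneg (h0 n)) hbound ?_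
  simpa using ((tendsto_sum_nat_add a).comp (Nat.tendsto_div_const_atTop two_ne_zero)).const_mul 2

theorem EReal.ne_top_of_add_coe_le_add_coe {x y : EReal} {a b : ℝ} (h : x + a ≤ y + b)
    (hy : y ≠ ⊤) : x ≠ ⊤ := by
  rintro rfl
  rw [EReal.top_add_coe, top_le_iff] at h
  exact (EReal.add_lt_top hy (EReal.coe_ne_top b)).ne h

section Hilbert

variable {H : Type*} [NormedAddCommGroup H] [InnerProductSpace ℝ H]

theorem HasLineDerivAt.le_of_forall_le_mul {h : H → ℝ} {h' c : ℝ} {p d : H}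
    (hh : HasLineDerivAt ℝ h h' p d) (hc : ∀ t ∈ Ioo (0 : ℝ) 1, h (p + t • d) - h p ≤ t * c) :
    h' ≤ c := by
  refine le_of_tendsto hh.tendsto_slope_zero_right ?_
  filter_upwards [Ioo_mem_nhdsGT one_pos] with t ht
  rw [smul_eq_mul, inv_mul_eq_div, div_le_iff₀ ht.1, mul_comm]
  exact hc t ht

theorem two_mul_norm_sq_add_le_of_inner_nonneg {β γ : ℝ} (hβ : 0 ≤ β) (hγ : 0 < γ) {a e u : H}
    (hae : 0 ≤ ⟪a, e⟫) (hu : β * ‖u‖ ^ 2 ≤ ⟪u, a + e + γ • u⟫) :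
    2 * β * ‖e‖ ^ 2 + (2 * β - γ) * ‖a + γ • u‖ ^ 2 ≤ 2 * β * ‖a + e + γ • u‖ ^ 2 := by
  -- the slack is `γ ‖a - (2β - γ) u‖² + 4β ⟪a, e⟫` plus `4βγ` times the slack in `hu`
  have hsq : 0 ≤ γ * ‖a - (2 * β - γ) • u‖ ^ 2 := by positivity
  have hu' := mul_le_mul_of_nonneg_left hu (by positivity : (0 : ℝ) ≤ 4 * β * γ)
  have hae' := mul_nonneg (by positivity : (0 : ℝ) ≤ 4 * β) hae
  simp only [norm_add_sq_real, norm_sub_sq_real, inner_add_left, inner_add_right,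
    real_inner_smul_right, norm_smul, mul_pow, real_inner_self_eq_norm_sq,
    Real.norm_eq_abs, sq_abs] at hsq hu' ⊢
  rw [real_inner_comm e a, real_inner_comm u a, real_inner_comm u e] at *
  nlinarith

variable [CompleteSpace H]

theorem HasGradientAt.hasLineDerivAt {h : H → ℝ} {u p : H} (hu : HasGradientAt h u p) (d : H) :
    HasLineDerivAt ℝ h ⟪u, d⟫ p d := by
  simpa using hu.hasFDerivAt.hasLineDerivAt d

theorem hasGradientAt_one_div_two_mul_norm_sub_sq (γ : ℝ) (v p : H) :
    HasGradientAt (fun y => 1 / (2 * γ) * ‖y - v‖ ^ 2) (γ⁻¹ • (p - v)) p := by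
  rw [hasGradientAt_iff_hasFDerivAt]
  refine ((((hasFDerivAt_id p).sub_const v).norm_sq).const_mul (1 / (2 * γ))).congr_fderiv ?_
  ext d
  simp only [id_eq, map_sub, ContinuousLinearMap.comp_id, smul_apply, sub_apply,
    coe_innerSL_apply, nsmul_eq_mul, Nat.cast_ofNat, smul_eq_mul, map_smul,
    InnerProductSpace.toDual_apply_apply]
  ring

theorem ConvexOn.add_inner_le_of_hasGradientAt {g : H → ℝ} (hg : ConvexOn ℝ univ g) {u x : H}
    (hu : HasGradientAt g u x) (y : H) : g x + ⟪u, y - x⟫ ≤ g y := by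
  suffices ⟪u, y - x⟫ ≤ g y - g x by linarith
  refine (hu.hasLineDerivAt _).le_of_forall_le_mul fun t ht => ?_
  have hconv := hg.2 (mem_univ x) (mem_univ y) (sub_nonneg.2 ht.2.le) ht.1.le (by ring)
  have hseg : x + t • (y - x) = (1 - t) • x + t • y := by module
  rw [hseg]
  simp only [smul_eq_mul] at hconv
  linarith

theorem le_add_inner_add_of_lipschitz_gradient {g : H → ℝ} {g' : H → H}
    (hg' : ∀ x, HasGradientAt g (g' x) x) {L : ℝ}
    (hLip : ∀ x y, ‖g' x - g' y‖ ≤ L * ‖x - y‖) (x y : H) :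
    g y ≤ g x + ⟪g' x, y - x⟫ + L / 2 * ‖y - x‖ ^ 2 := by
  set d := y - x
  set φ : ℝ → ℝ := fun t => g (x + t • d) - t * ⟪g' x, d⟫ - t ^ 2 * (L / 2) * ‖d‖ ^ 2
  have hφ' (t : ℝ) : HasDerivAt φ (⟪g' (x + t • d) - g' x, d⟫ - t * L * ‖d‖ ^ 2) t := by
    have hline : HasDerivAt (fun s : ℝ => x + s • d) d t := by
      simpa using ((hasDerivAt_id t).smul_const d).const_add x
    have hg := (hg' (x + t • d)).hasFDerivAt.comp_hasDerivAt t hline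
    simp only [Function.comp_def, InnerProductSpace.toDual_apply_apply] at hg
    refine ((hg.sub ((hasDerivAt_id t).mul_const ⟪g' x, d⟫)).sub
      (((hasDerivAt_pow 2 t).mul_const (L / 2)).mul_const (‖d‖ ^ 2))).congr_deriv ?_
    rw [inner_sub_left]
    ring
  have hanti : AntitoneOn φ (Icc 0 1) := by
    refine antitoneOn_of_deriv_nonpos (convex_Icc 0 1)
      (fun t _ => (hφ' t).continuousAt.continuousWithinAt)
      (fun t _ => (hφ' t).differentiableAt.differentiableWithinAt) fun t ht => ?_
    rw [interior_Icc] at ht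
    have hstep : ‖x + t • d - x‖ = t * ‖d‖ := by
      rw [add_sub_cancel_left, norm_smul, Real.norm_of_nonneg ht.1.le]
    calc deriv φ t ≤ ‖g' (x + t • d) - g' x‖ * ‖d‖ - t * L * ‖d‖ ^ 2 := by
          rw [(hφ' t).deriv]; gcongr; exact real_inner_le_norm _ _
      _ ≤ L * (t * ‖d‖) * ‖d‖ - t * L * ‖d‖ ^ 2 := by
          gcongr; exact hstep ▸ hLip _ _
      _ = 0 := by ring
  have h01 := hanti (left_mem_Icc.2 zero_le_one) (right_mem_Icc.2 zero_le_one) zero_le_one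
  simp only [φ, zero_smul, add_zero, zero_mul, sub_zero, one_smul, one_mul, d,
    add_sub_cancel] at h01
  linarith

theorem ConvexOn.add_inner_add_norm_sq_le {g : H → ℝ} (hg : ConvexOn ℝ univ g) {g' : H → H}
    (hg' : ∀ x, HasGradientAt g (g' x) x) {β : ℝ} (hβ : 0 < β)
    (hLip : ∀ x y, ‖g' x - g' y‖ ≤ 1 / β * ‖x - y‖) (x y : H) :
    g x + ⟪g' x, y - x⟫ + β / 2 * ‖g' y - g' x‖ ^ 2 ≤ g y := by
  -- compare both bounds at the gradient step `y - β • (g' y - g' x)`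
  have hlow := hg.add_inner_le_of_hasGradientAt (hg' x) (y - β • (g' y - g' x))
  have hup := le_add_inner_add_of_lipschitz_gradient hg' hLip y (y - β • (g' y - g' x))
  have hwx : y - β • (g' y - g' x) - x = (y - x) - β • (g' y - g' x) := by abel
  have hwy : y - β • (g' y - g' x) - y = -(β • (g' y - g' x)) := by abel
  rw [hwx, inner_sub_right, real_inner_smul_right] at hlow
  rw [hwy, inner_neg_right, real_inner_smul_right, norm_neg, norm_smul, Real.norm_of_nonneg hβ.le,
    mul_pow] at hup
  have hsq : β * ‖g' y - g' x‖ ^ 2 = β * ⟪g' y, g' y - g' x⟫ - β * ⟪g' x, g' y - g' x⟫ := by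
    rw [← mul_sub, ← inner_sub_left, real_inner_self_eq_norm_sq]
  have hβ' : 1 / β / 2 * (β ^ 2 * ‖g' y - g' x‖ ^ 2) = β / 2 * ‖g' y - g' x‖ ^ 2 := by
    field_simp
  linarith

theorem ConvexOn.mul_norm_sq_le_inner_gradient {g : H → ℝ} (hg : ConvexOn ℝ univ g) {g' : H → H}
    (hg' : ∀ x, HasGradientAt g (g' x) x) {β : ℝ} (hβ : 0 < β)
    (hLip : ∀ x y, ‖g' x - g' y‖ ≤ 1 / β * ‖x - y‖) (x y : H) :
    β * ‖g' x - g' y‖ ^ 2 ≤ ⟪g' x - g' y, x - y⟫ := by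
  have hxy := hg.add_inner_add_norm_sq_le hg' hβ hLip x y
  have hyx := hg.add_inner_add_norm_sq_le hg' hβ hLip y x
  rw [norm_sub_rev] at hxy
  have hxy' : ⟪g' x, y - x⟫ = -⟪g' x, x - y⟫ := by rw [← inner_neg_right, neg_sub]
  rw [inner_sub_left]
  linarith

theorem toReal_sub_inner_le_of_forall_add_le {f : H → EReal} (hf_bot : ∀ x, f x ≠ ⊥)
    (hf_conv : ∀ x y : H, ∀ a b : ℝ, 0 ≤ a → 0 ≤ b → a + b = 1 →
      f (a • x + b • y) ≤ (a : EReal) * f x + (b : EReal) * f y)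
    {h : H → ℝ} {p u : H} (hu : HasGradientAt h u p) (hp : f p ≠ ⊤)
    (hmin : ∀ y, f p + (h p : EReal) ≤ f y + (h y : EReal)) {y : H} (hy : f y ≠ ⊤) :
    (f p).toReal - ⟪u, y - p⟫ ≤ (f y).toReal := by
  -- `f` lies below its chord from `p` to `y`, so minimality of `f + h` at `p` bounds the
  -- difference quotients of `-h` along that chord
  have hline : HasLineDerivAt ℝ (fun q => -h q) (-⟪u, y - p⟫) p (y - p) :=
    (hu.hasLineDerivAt (y - p)).neg
  suffices -⟪u, y - p⟫ ≤ (f y).toReal - (f p).toReal by linarith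
  refine hline.le_of_forall_le_mul fun t ht => ?_
  have hconv : f (p + t • (y - p)) ≤ (((1 - t) * (f p).toReal + t * (f y).toReal : ℝ) : EReal) := by
    have hseg : p + t • (y - p) = (1 - t) • p + t • y := by module
    rw [hseg, EReal.coe_add, EReal.coe_mul, EReal.coe_mul, EReal.coe_toReal hp (hf_bot p),
      EReal.coe_toReal hy (hf_bot y)]
    exact hf_conv p y (1 - t) t (sub_nonneg.2 ht.2.le) ht.1.le (by ring)
  have hcomp : (((f p).toReal + h p : ℝ) : EReal) ≤
      (((1 - t) * (f p).toReal + t * (f y).toReal + h (p + t • (y - p)) : ℝ) : EReal) := by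
    rw [EReal.coe_add, EReal.coe_add, EReal.coe_toReal hp (hf_bot p)]
    exact (hmin _).trans (add_le_add_left hconv _)
  rw [EReal.coe_le_coe_iff] at hcomp
  linarith

variable {g : H → ℝ} {g' : H → H} {β γ : ℝ}

theorem fbs_objective_step (hg : ConvexOn ℝ univ g) (hg' : ∀ x, HasGradientAt g (g' x) x)
    (hLip : ∀ x y, ‖g' x - g' y‖ ≤ 1 / β * ‖x - y‖) (hγ : 0 < γ) {z p x : H} {fp fx : ℝ}
    (hsub : fp - ⟪γ⁻¹ • (p - (z - γ • g' z)), x - p⟫ ≤ fx) :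
    fp + g p ≤ fx + g x + (‖z - x‖ ^ 2 - ‖p - x‖ ^ 2) / (2 * γ) +
      (1 / (2 * β) - 1 / (2 * γ)) * ‖p - z‖ ^ 2 := by
  have hdesc := le_add_inner_add_of_lipschitz_gradient hg' hLip z p
  have hconv := hg.add_inner_le_of_hasGradientAt (hg' z) x
  have hsplit : ⟪γ⁻¹ • (p - (z - γ • g' z)), x - p⟫ =
      γ⁻¹ * ⟪p - z, x - p⟫ + (⟪g' z, x - z⟫ - ⟪g' z, p - z⟫) := by
    rw [← inner_sub_right, sub_sub_sub_cancel_right, real_inner_smul_left,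
      show p - (z - γ • g' z) = (p - z) + γ • g' z by abel, inner_add_left,
      real_inner_smul_left]
    field_simp
  have hpolar : γ⁻¹ * ⟪p - z, x - p⟫ = (‖z - x‖ ^ 2 - ‖p - z‖ ^ 2 - ‖p - x‖ ^ 2) / (2 * γ) := by
    have h := norm_add_sq_real (p - z) (x - p)
    rw [show p - z + (x - p) = x - z by abel, norm_sub_rev x z, norm_sub_rev x p] at h
    field_simp
    linarith
  have hβ2 : 1 / β / 2 = 1 / (2 * β) := by ring
  rw [hsplit, hpolar] at hsub
  rw [hβ2] at hdesc
  have hsplit' : (‖z - x‖ ^ 2 - ‖p - z‖ ^ 2 - ‖p - x‖ ^ 2) / (2 * γ) =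
      (‖z - x‖ ^ 2 - ‖p - x‖ ^ 2) / (2 * γ) - 1 / (2 * γ) * ‖p - z‖ ^ 2 := by ring
  linarith

theorem fbs_objective_descent (hg : ConvexOn ℝ univ g) (hg' : ∀ x, HasGradientAt g (g' x) x)
    (hLip : ∀ x y, ‖g' x - g' y‖ ≤ 1 / β * ‖x - y‖) (hγ : 0 < γ) (hγβ : γ ≤ 2 * β) {z p : H}
    {fp fz : ℝ} (hsub : fp - ⟪γ⁻¹ • (p - (z - γ • g' z)), z - p⟫ ≤ fz) :
    fp + g p ≤ fz + g z := by
  have h := fbs_objective_step hg hg' hLip hγ hsub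
  rw [sub_self, norm_zero] at h
  have hκ : 1 / (2 * β) ≤ 1 / γ := one_div_le_one_div_of_le hγ hγβ
  have hD : (0 ^ 2 - ‖p - z‖ ^ 2) / (2 * γ) + (1 / (2 * β) - 1 / (2 * γ)) * ‖p - z‖ ^ 2 =
      (1 / (2 * β) - 1 / γ) * ‖p - z‖ ^ 2 := by ring
  linarith [mul_nonpos_of_nonpos_of_nonneg (sub_nonpos.2 hκ) (sq_nonneg ‖p - z‖)]

theorem fbs_fejer (hg : ConvexOn ℝ univ g) (hg' : ∀ x, HasGradientAt g (g' x) x) (hβ : 0 < β)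
    (hLip : ∀ x y, ‖g' x - g' y‖ ≤ 1 / β * ‖x - y‖) (hγ : 0 < γ) {z p x : H} {fp fx : ℝ}
    (hp : fp - ⟪γ⁻¹ • (p - (z - γ • g' z)), x - p⟫ ≤ fx) (hx : fx - ⟪g' x, p - x⟫ ≤ fp) :
    2 * β * ‖p - x‖ ^ 2 + (2 * β - γ) * ‖p - z‖ ^ 2 ≤ 2 * β * ‖z - x‖ ^ 2 := by
  have hsum : ⟪γ⁻¹ • (p - (z - γ • g' z)), x - p⟫ + ⟪g' x, p - x⟫ =
      γ⁻¹ * ⟪z - p - γ • (g' z - g' x), p - x⟫ := by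
    simp only [inner_sub_left, inner_sub_right, real_inner_smul_left]
    field_simp
    ring
  -- monotonicity of the subdifferential of `f`, tested on the subgradients at `p` and `x`
  have hfirm : 0 ≤ ⟪z - p - γ • (g' z - g' x), p - x⟫ := by
    have : 0 ≤ γ⁻¹ * ⟪z - p - γ • (g' z - g' x), p - x⟫ := by linarith
    exact nonneg_of_mul_nonneg_right (by linarith) (inv_pos.2 hγ)
  have hcoco := hg.mul_norm_sq_le_inner_gradient hg' hβ hLip z x
  have hzx : z - x = (z - p - γ • (g' z - g' x)) + (p - x) + γ • (g' z - g' x) := by abel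
  have hpz : ‖p - z‖ = ‖z - p - γ • (g' z - g' x) + γ • (g' z - g' x)‖ := by
    rw [norm_sub_rev, sub_add_cancel]
  rw [hpz, hzx]
  rw [hzx] at hcoco
  exact two_mul_norm_sq_add_le_of_inner_nonneg hβ.le hγ hfirm hcoco

end Hilbert

theorem fbs_sum_gap_le {β γ : ℝ} (hβ : 0 < β) (hγ : 0 < γ) (hγβ : γ < 2 * β) {e R D : ℕ → ℝ}
    (hR : ∀ k, 0 ≤ R k) (hD : ∀ k, 0 ≤ D k)
    (hstep : ∀ k, e k ≤ (R k - R (k + 1)) / (2 * γ) + (1 / (2 * β) - 1 / (2 * γ)) * D k)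
    (hfejer : ∀ k, 2 * β * R (k + 1) + (2 * β - γ) * D k ≤ 2 * β * R k) (n : ℕ) :
    ∑ i ∈ range n, e i ≤
      (if γ ≤ β then 1 / (2 * γ)
        else 1 / (2 * γ) + (1 / (2 * β) - 1 / (2 * γ)) *
          (2 * β / (4 * β - γ)) / (1 - 2 * β / (4 * β - γ))) * R 0 := by
  set κ := 1 / (2 * β) - 1 / (2 * γ)
  have hgap : ∑ i ∈ range n, e i - κ * ∑ i ∈ range n, D i ≤ R 0 / (2 * γ) := by
    have := sum_range_le_sub_of_add_le (e := fun k => e k - κ * D k) (R := fun k => R k / (2 * γ))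
      (fun k => by have := hstep k; rw [sub_div] at this; linarith) n
    rw [sum_sub_distrib, ← mul_sum] at this
    linarith [div_nonneg (hR n) (by positivity : (0 : ℝ) ≤ 2 * γ)]
  have hsteps : (2 * β - γ) * ∑ i ∈ range n, D i ≤ 2 * β * R 0 := by
    have := sum_range_le_sub_of_add_le (e := fun k => (2 * β - γ) * D k) (R := fun k => 2 * β * R k)
      (fun k => by linarith [hfejer k]) n
    rw [← mul_sum] at this
    linarith [mul_nonneg (by positivity : (0 : ℝ) ≤ 2 * β) (hR n)]
  have hDsum : 0 ≤ ∑ i ∈ range n, D i := sum_nonneg fun i _ => hD i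
  split_ifs with hcase
  · have : κ * ∑ i ∈ range n, D i ≤ 0 :=
      mul_nonpos_of_nonpos_of_nonneg
        (sub_nonpos.2 (one_div_le_one_div_of_le (by positivity) (by linarith))) hDsum
    rw [one_div_mul_eq_div]
    linarith
  · have hα : 2 * β / (4 * β - γ) / (1 - 2 * β / (4 * β - γ)) = 2 * β / (2 * β - γ) := by
      rw [one_sub_div (by linarith), div_div_div_cancel_right₀ (by linarith)]
      ring_nf
    have hκ : 0 ≤ κ := sub_nonneg.2 (one_div_le_one_div_of_le (by positivity) (by linarith))
    rw [mul_div_assoc, hα]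
    have : κ * ∑ i ∈ range n, D i ≤ κ * (2 * β / (2 * β - γ) * R 0) := by
      gcongr
      rw [div_mul_eq_mul_div, le_div_iff₀ (by linarith)]
      linarith
    have : (1 / (2 * γ) + κ * (2 * β / (2 * β - γ))) * R 0 =
        R 0 / (2 * γ) + κ * (2 * β / (2 * β - γ) * R 0) := by ring
    linarith

theorem fbs_objective_rate_general
    {H : Type*} [NormedAddCommGroup H] [InnerProductSpace ℝ H] [CompleteSpace H]
    (f : H → EReal)
    (hf_bot : ∀ x, f x ≠ ⊥)
    (hf_conv : ∀ x y : H, ∀ a b : ℝ, 0 ≤ a → 0 ≤ b → a + b = 1 →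
      f (a • x + b • y) ≤ (a : EReal) * f x + (b : EReal) * f y)
    (g : H → ℝ) (hg_conv : ConvexOn ℝ Set.univ g)
    (g' : H → H) (hg' : ∀ x : H, HasGradientAt g (g' x) x)
    (β : ℝ) (hβ : 0 < β)
    (hLip : ∀ x y : H, ‖g' x - g' y‖ ≤ (1 / β) * ‖x - y‖)
    (γ : ℝ) (hγ : 0 < γ) (hγ2β : γ < 2 * β)
    (proxf : H → H)
    (hproxf : ∀ x p : H, proxf x = p ↔
      ∀ y : H, f p + ((1 / (2 * γ) * ‖p - x‖ ^ 2 : ℝ) : EReal) ≤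
        f y + ((1 / (2 * γ) * ‖y - x‖ ^ 2 : ℝ) : EReal))
    (xstar : H)
    (hxstar : ∀ y : H, f xstar + ((g xstar : ℝ) : EReal) ≤ f y + ((g y : ℝ) : EReal))
    (z : ℕ → H) (hz0 : f (z 0) ≠ ⊤)
    (hz : ∀ k, z (k + 1) = proxf (z k - γ • g' (z k))) :
    (∀ k : ℕ,
      f (z (k + 1)) + ((g (z (k + 1)) : ℝ) : EReal) - (f xstar + ((g xstar : ℝ) : EReal)) ≤
        (((if γ ≤ β then 1 / (2 * γ)
            else 1 / (2 * γ) + (1 / (2 * β) - 1 / (2 * γ)) *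
              (2 * β / (4 * β - γ)) / (1 - 2 * β / (4 * β - γ))) *
          ‖z 0 - xstar‖ ^ 2 / ((k : ℝ) + 1) : ℝ) : EReal)) ∧
    Filter.Tendsto
      (fun k : ℕ => (((k : ℝ) + 1 : ℝ) : EReal) *
        (f (z (k + 1)) + ((g (z (k + 1)) : ℝ) : EReal) -
          (f xstar + ((g xstar : ℝ) : EReal))))
      Filter.atTop (nhds 0) := by
  have hprox_min (k : ℕ) := (hproxf _ _).1 (hz k).symm
  have hfin (k : ℕ) : f (z k) ≠ ⊤ := by
    induction k with
    | zero => exact hz0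
    | succ k ih => exact EReal.ne_top_of_add_coe_le_add_coe (hprox_min k (z k)) ih
  have hxfin : f xstar ≠ ⊤ := EReal.ne_top_of_add_coe_le_add_coe (hxstar (z 0)) hz0
  have hprox (k : ℕ) {y : H} (hy : f y ≠ ⊤) := toReal_sub_inner_le_of_forall_add_le hf_bot hf_conv
    (hasGradientAt_one_div_two_mul_norm_sub_sq γ _ _) (hfin (k + 1)) (hprox_min k) hy
  have hopt {y : H} (hy : f y ≠ ⊤) :=
    toReal_sub_inner_le_of_forall_add_le hf_bot hf_conv (hg' xstar) hxfin hxstar hy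
  set F : H → ℝ := fun y => (f y).toReal + g y
  have hF {y : H} (hy : f y ≠ ⊤) : f y + ((g y : ℝ) : EReal) = (F y : EReal) := by
    rw [EReal.coe_add, EReal.coe_toReal hy (hf_bot y)]
  set gap : ℕ → ℝ := fun k => F (z (k + 1)) - F xstar
  have hgap_nonneg (k : ℕ) : 0 ≤ gap k :=
    sub_nonneg.2 <| EReal.coe_le_coe_iff.1 <| hF hxfin ▸ hF (hfin _) ▸ hxstar (z (k + 1))
  have hgap_anti : Antitone gap := antitone_nat_of_succ_le fun k =>
    sub_le_sub_right (fbs_objective_descent hg_conv hg' hLip hγ hγ2β.le (hprox _ (hfin _))) _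
  have hsum := fbs_sum_gap_le hβ hγ hγ2β (e := gap) (R := fun k => ‖z k - xstar‖ ^ 2)
    (D := fun k => ‖z (k + 1) - z k‖ ^ 2) (fun _ => by positivity) (fun _ => by positivity)
    (fun k => by linarith [fbs_objective_step hg_conv hg' hLip hγ (hprox k hxfin)])
    (fun k => fbs_fejer hg_conv hg' hβ hLip hγ (hprox k hxfin) (hopt (hfin (k + 1))))
  have hcoe (k : ℕ) : f (z (k + 1)) + ((g (z (k + 1)) : ℝ) : EReal) -
      (f xstar + ((g xstar : ℝ) : EReal)) = (gap k : EReal) := by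
    rw [hF (hfin _), hF hxfin, ← EReal.coe_sub]
  refine ⟨fun k => ?_, ?_⟩
  · rw [hcoe, EReal.coe_le_coe_iff]
    exact hgap_anti.le_div_of_sum_range_le hsum k
  · simp_rw [hcoe, ← EReal.coe_mul, ← EReal.coe_zero, EReal.tendsto_coe]
    have hs : Summable gap := summable_of_sum_range_le hgap_nonneg hsum
    simpa only [add_mul, one_mul, add_zero] using
      (hgap_anti.tendsto_natCast_mul_atTop_zero hs).add hs.tendsto_atTop_zero

/-- Theorem 2 (objective convergence of FBS): let `f : H → ℝ ∪ {∞}` be closed, proper,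
convex, `g : H → ℝ` convex and differentiable with `∇g` Lipschitz of constant `1/β`,
`0 < γ < 2β`, `x*` a minimizer of `f + g`, and let `z^{k+1} = prox_{γf}(z^k − γ ∇g(z^k))`
from `z^0 ∈ dom(f+g)`. Then for all `k ≥ 0`,
`f(z^{k+1}) + g(z^{k+1}) − f(x*) − g(x*) ≤ C·‖z^0 − x*‖²/(k+1)` where `C = 1/(2γ)` if
`γ ≤ β` and `C = 1/(2γ) + (1/(2β) − 1/(2γ))·α/(1−α)` with `α = 2β/(4β−γ)` otherwise,
and moreover `(k+1)·(f(z^{k+1}) + g(z^{k+1}) − f(x*) − g(x*)) → 0`. -/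
theorem fbs_objective_rate
    {H : Type*} [NormedAddCommGroup H] [InnerProductSpace ℝ H] [CompleteSpace H]
    (f : H → EReal)
    (hf_bot : ∀ x, f x ≠ ⊥) (hf_proper : ∃ x, f x ≠ ⊤)
    (hf_lsc : LowerSemicontinuous f)
    (hf_conv : ∀ x y : H, ∀ a b : ℝ, 0 ≤ a → 0 ≤ b → a + b = 1 →
      f (a • x + b • y) ≤ (a : EReal) * f x + (b : EReal) * f y)
    (g : H → ℝ) (hg_conv : ConvexOn ℝ Set.univ g)
    (g' : H → H) (hg' : ∀ x : H, HasGradientAt g (g' x) x)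
    (β : ℝ) (hβ : 0 < β)
    (hLip : ∀ x y : H, ‖g' x - g' y‖ ≤ (1 / β) * ‖x - y‖)
    (γ : ℝ) (hγ : 0 < γ) (hγ2β : γ < 2 * β)
    (proxf : H → H)
    (hproxf : ∀ x p : H, proxf x = p ↔
      ∀ y : H, f p + ((1 / (2 * γ) * ‖p - x‖ ^ 2 : ℝ) : EReal) ≤
        f y + ((1 / (2 * γ) * ‖y - x‖ ^ 2 : ℝ) : EReal))
    (xstar : H)
    (hxstar : ∀ y : H, f xstar + ((g xstar : ℝ) : EReal) ≤ f y + ((g y : ℝ) : EReal))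
    (z : ℕ → H) (hz0 : f (z 0) ≠ ⊤)
    (hz : ∀ k, z (k + 1) = proxf (z k - γ • g' (z k))) :
    (∀ k : ℕ,
      f (z (k + 1)) + ((g (z (k + 1)) : ℝ) : EReal) - (f xstar + ((g xstar : ℝ) : EReal)) ≤
        (((if γ ≤ β then 1 / (2 * γ)
            else 1 / (2 * γ) + (1 / (2 * β) - 1 / (2 * γ)) *
              (2 * β / (4 * β - γ)) / (1 - 2 * β / (4 * β - γ))) *
          ‖z 0 - xstar‖ ^ 2 / ((k : ℝ) + 1) : ℝ) : EReal)) ∧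
    Filter.Tendsto
      (fun k : ℕ => (((k : ℝ) + 1 : ℝ) : EReal) *
        (f (z (k + 1)) + ((g (z (k + 1)) : ℝ) : EReal) -
          (f xstar + ((g xstar : ℝ) : EReal))))
      Filter.atTop (nhds 0) :=
  fbs_objective_rate_general f hf_bot hf_conv g hg_conv g' hg' β hβ hLip γ hγ hγ2β proxf hproxf
    xstar hxstar z hz0 hz
end

section
/- Let H be a real Hilbert space, let C ⊆ H be nonempty, and let (z^j)_{j≥0} ⊆ H be Fejér monotone with respect to C, i.e. ‖z^{k+1} − z‖ ≤ ‖z^k − z‖ for all z ∈ C and all k. Suppose there are sequences (x^j)_{j≥0}, (y^j)_{j≥0} ⊆ H and positive reals (λ_j)_{j≥0} with z^{k+1} − z^k = λ_k(x^k − y^k) for all k. Let Λ_k := ∑_{i=0}^k λ_i, x̄^k := (1/Λ_k)∑_{i=0}^k λ_i x^i, and ȳ^k := (1/Λ_k)∑_{i=0}^k λ_i y^i. Then for every z ∈ C and every k, ‖x̄^k − ȳ^k‖² ≤ 4‖z^0 − z‖²/Λ_k². -/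
/-!
Telescoping the recursion gives `Λ_k (x̄^k - ȳ^k) = z^{k+1} - z^0`, and Fejér monotonicity keeps
every `z^n` within `‖z^0 - z‖` of `z`, so `‖z^{k+1} - z^0‖ ≤ 2 ‖z^0 - z‖` by the triangle inequality.
-/

open Finset

def FejerMonotone {α : Type*} [PseudoMetricSpace α] (C : Set α) (z : ℕ → α) : Prop :=
  ∀ w ∈ C, ∀ k, dist (z (k + 1)) w ≤ dist (z k) w

namespace FejerMonotone

variable {α : Type*} [PseudoMetricSpace α] {C : Set α} {z : ℕ → α} {w : α}

theorem dist_le_dist_zero (hz : FejerMonotone C z) (hw : w ∈ C) (n : ℕ) :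
    dist (z n) w ≤ dist (z 0) w :=
  antitone_nat_of_succ_le (f := fun k ↦ dist (z k) w) (hz w hw) (Nat.zero_le n)

theorem dist_zero_le (hz : FejerMonotone C z) (hw : w ∈ C) (n : ℕ) :
    dist (z n) (z 0) ≤ 2 * dist (z 0) w :=
  calc dist (z n) (z 0) ≤ dist (z n) w + dist (z 0) w := dist_triangle_right _ _ _
    _ ≤ 2 * dist (z 0) w := by linarith [hz.dist_le_dist_zero hw n]

end FejerMonotone

theorem sum_range_smul_sub_sum_range_smul_eq_sub {R M : Type*} [Ring R] [AddCommGroup M]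
    [Module R M] {z x y : ℕ → M} {c : ℕ → R} (hrec : ∀ k, z (k + 1) - z k = c k • (x k - y k))
    (n : ℕ) : ∑ i ∈ range n, c i • x i - ∑ i ∈ range n, c i • y i = z n - z 0 := by
  rw [← sum_range_sub z, ← sum_sub_distrib]
  exact sum_congr rfl fun i _ ↦ by rw [hrec, smul_sub]

theorem fejer_monotone_ergodic_fpr_general
    {H : Type*} [NormedAddCommGroup H] [InnerProductSpace ℝ H]
    (C : Set H)
    (z x y : ℕ → H) (lam : ℕ → ℝ)
    (hfejer : ∀ w ∈ C, ∀ k : ℕ, ‖z (k + 1) - w‖ ≤ ‖z k - w‖)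
    (hrec : ∀ k : ℕ, z (k + 1) - z k = lam k • (x k - y k)) :
    ∀ w ∈ C, ∀ k : ℕ,
      ‖(1 / ∑ i ∈ Finset.range (k + 1), lam i) • (∑ i ∈ Finset.range (k + 1), lam i • x i) -
        (1 / ∑ i ∈ Finset.range (k + 1), lam i) • (∑ i ∈ Finset.range (k + 1), lam i • y i)‖ ^ 2
        ≤ 4 * ‖z 0 - w‖ ^ 2 / (∑ i ∈ Finset.range (k + 1), lam i) ^ 2 := by
  intro w hw k
  have hz : FejerMonotone C z := by simpa only [FejerMonotone, dist_eq_norm] using hfejer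
  have hstep : ‖z (k + 1) - z 0‖ ≤ 2 * ‖z 0 - w‖ := by
    simpa only [dist_eq_norm] using hz.dist_zero_le hw (k + 1)
  rw [← smul_sub, sum_range_smul_sub_sum_range_smul_eq_sub hrec, norm_smul, mul_pow,
    Real.norm_eq_abs, sq_abs, one_div, inv_pow, inv_mul_eq_div]
  gcongr
  calc ‖z (k + 1) - z 0‖ ^ 2 ≤ (2 * ‖z 0 - w‖) ^ 2 := by gcongr
    _ = 4 * ‖z 0 - w‖ ^ 2 := by ring

/-- Theorem 3 (ergodic FPR of Fejér monotone sequences): let `(z^j)` be Fejér monotone with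
respect to a nonempty set `C` in a real Hilbert space, and suppose
`z^{k+1} − z^k = λ_k (x^k − y^k)` with `λ_k > 0`. With `Λ_k = ∑_{i=0}^k λ_i`,
`x̄^k = (1/Λ_k) ∑_{i=0}^k λ_i x^i` and `ȳ^k = (1/Λ_k) ∑_{i=0}^k λ_i y^i`, we have
`‖x̄^k − ȳ^k‖² ≤ 4 ‖z^0 − z‖² / Λ_k²` for every `z ∈ C` and every `k`. -/
theorem fejer_monotone_ergodic_fpr
    {H : Type*} [NormedAddCommGroup H] [InnerProductSpace ℝ H] [CompleteSpace H]
    (C : Set H) (hC : C.Nonempty)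
    (z x y : ℕ → H) (lam : ℕ → ℝ) (hlam : ∀ k, 0 < lam k)
    (hfejer : ∀ w ∈ C, ∀ k : ℕ, ‖z (k + 1) - w‖ ≤ ‖z k - w‖)
    (hrec : ∀ k : ℕ, z (k + 1) - z k = lam k • (x k - y k)) :
    ∀ w ∈ C, ∀ k : ℕ,
      ‖(1 / ∑ i ∈ Finset.range (k + 1), lam i) • (∑ i ∈ Finset.range (k + 1), lam i • x i) -
        (1 / ∑ i ∈ Finset.range (k + 1), lam i) • (∑ i ∈ Finset.range (k + 1), lam i • y i)‖ ^ 2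
        ≤ 4 * ‖z 0 - w‖ ^ 2 / (∑ i ∈ Finset.range (k + 1), lam i) ^ 2 :=
  fejer_monotone_ergodic_fpr_general C z x y lam hfejer hrec
end

section
/- Let f, g : H → ℝ ∪ {∞} be closed, proper, convex functions on a real Hilbert space H and let γ > 0. Then a point x ∈ H satisfies 0 ∈ ∂f(x) + ∂g(x) if and only if there exists z ∈ H with T_PRS(z) = z and x = prox_{γg}(z). Moreover, if z* is a fixed point of T_PRS and x* := prox_{γg}(z*), then z* − x* ∈ γ·∂g(x*). -/
/-!
For convex `h`, `p = prox_{γh}(x)` iff `(x - p)/γ ∈ ∂h(p)`. One direction is the identity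
`‖y - x‖² = ‖y - p‖² - 2⟪x - p, y - p⟫ + ‖x - p‖²`; for the other, compare `p` with the points
`p + t (w - p)` of the segment towards `w`, use convexity, divide by `t` and let `t → 0⁺`.
Writing `x = prox_{γg}(z)`, `z` is fixed by `T_PRS` iff `prox_{γf}(2x - z) = x`, i.e. iff
`(x - z)/γ ∈ ∂f(x)`; together with `(z - x)/γ ∈ ∂g(x)` these are two subgradients summing to `0`.
Conversely, from `-v ∈ ∂f(x)` and `v ∈ ∂g(x)` the fixed point is `z = x + γ v`.
-/

open Filter Set Topology
open scoped RealInnerProductSpace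

section Prox

variable {H : Type*} [NormedAddCommGroup H] [InnerProductSpace ℝ H]

def IsSubgradient (h : H → EReal) (x u : H) : Prop :=
  ∀ w, h x + (⟪u, w - x⟫ : EReal) ≤ h w

def IsProx (h : H → EReal) (γ : ℝ) (x p : H) : Prop :=
  ∀ y, h p + ((1 / (2 * γ) * ‖p - x‖ ^ 2 : ℝ) : EReal) ≤
    h y + ((1 / (2 * γ) * ‖y - x‖ ^ 2 : ℝ) : EReal)

lemma le_of_forall_mul_le_add_sq {a b C : ℝ}
    (h : ∀ t ∈ Ioc (0 : ℝ) 1, t * a ≤ t * b + t ^ 2 * C) : a ≤ b := by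
  have hlim : Tendsto (fun t : ℝ => b + t * C) (𝓝[>] 0) (𝓝 b) := by
    have : Continuous fun t : ℝ => b + t * C := by fun_prop
    simpa using (this.tendsto 0).mono_left nhdsWithin_le_nhds
  refine ge_of_tendsto hlim ?_
  filter_upwards [Ioc_mem_nhdsGT one_pos] with t ht
  exact le_of_mul_le_mul_left (by linear_combination h t ht) ht.1

lemma IsSubgradient.isProx {h : H → EReal} {γ : ℝ} (hγ : 0 ≤ γ) {x p : H}
    (hp : IsSubgradient h p (γ⁻¹ • (x - p))) : IsProx h γ x p := by
  intro y
  have key : 1 / (2 * γ) * ‖p - x‖ ^ 2 + 1 / (2 * γ) * ‖y - p‖ ^ 2 =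
      ⟪γ⁻¹ • (x - p), y - p⟫ + 1 / (2 * γ) * ‖y - x‖ ^ 2 := by
    rw [show y - x = (y - p) - (x - p) by abel, norm_sub_sq_real (y - p), norm_sub_rev p x,
      real_inner_smul_left, real_inner_comm (x - p)]
    ring
  have hle : 1 / (2 * γ) * ‖p - x‖ ^ 2 ≤ ⟪γ⁻¹ • (x - p), y - p⟫ + 1 / (2 * γ) * ‖y - x‖ ^ 2 := by
    have : 0 ≤ 1 / (2 * γ) * ‖y - p‖ ^ 2 := by positivity
    linarith
  calc h p + ((1 / (2 * γ) * ‖p - x‖ ^ 2 : ℝ) : EReal)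
      ≤ h p + ((⟪γ⁻¹ • (x - p), y - p⟫ + 1 / (2 * γ) * ‖y - x‖ ^ 2 : ℝ) : EReal) := by
        gcongr
    _ = h p + (⟪γ⁻¹ • (x - p), y - p⟫ : EReal) + ((1 / (2 * γ) * ‖y - x‖ ^ 2 : ℝ) : EReal) := by
        rw [EReal.coe_add, add_assoc]
    _ ≤ h y + ((1 / (2 * γ) * ‖y - x‖ ^ 2 : ℝ) : EReal) := by
        gcongr
        exact hp y

lemma IsProx.isSubgradient {h : H → EReal}
    (hconv : ∀ x y : H, ∀ a b : ℝ, 0 ≤ a → 0 ≤ b → a + b = 1 →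
      h (a • x + b • y) ≤ (a : EReal) * h x + (b : EReal) * h y)
    {γ : ℝ} {x p : H} (hp : IsProx h γ x p) :
    IsSubgradient h p (γ⁻¹ • (x - p)) := by
  intro w
  have hpw := hp w
  induction hw : h w with
  | bot =>
    rw [hw, EReal.bot_add, le_bot_iff, EReal.add_eq_bot_iff] at hpw
    simp [hpw.resolve_right (EReal.coe_ne_bot _)]
  | top => exact le_top
  | coe s =>
    induction hpr : h p with
    | bot => simp
    | top =>
      rw [hw, hpr, EReal.top_add_coe, top_le_iff, ← EReal.coe_add] at hpw
      exact absurd hpw (EReal.coe_ne_top _)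
    | coe r =>
      have hseg : ∀ t ∈ Ioc (0 : ℝ) 1, r + 1 / (2 * γ) * ‖p - x‖ ^ 2 ≤
          (1 - t) * r + t * s + 1 / (2 * γ) * ‖(p - x) + t • (w - p)‖ ^ 2 := by
        intro t ht
        have hmin := hp ((1 - t) • p + t • w)
        have hcvx := hconv p w (1 - t) t (by linarith [ht.2]) ht.1.le (by ring)
        rw [hpr, hw] at hcvx
        rw [hpr, show (1 - t) • p + t • w - x = (p - x) + t • (w - p) by module] at hmin
        exact_mod_cast hmin.trans (add_le_add_left hcvx _)
      have hreal : r + γ⁻¹ * ⟪x - p, w - p⟫ ≤ s := by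
        refine le_of_forall_mul_le_add_sq (C := 1 / (2 * γ) * ‖w - p‖ ^ 2) fun t ht => ?_
        have hstep := hseg t ht
        rw [norm_add_sq_real, real_inner_smul_right, norm_smul, Real.norm_of_nonneg ht.1.le,
          show 1 / (2 * γ) = γ⁻¹ / 2 by ring] at hstep
        have hneg : ⟪p - x, w - p⟫ = -⟪x - p, w - p⟫ := by rw [← inner_neg_left, neg_sub]
        linear_combination hstep + γ⁻¹ * t * hneg
      rw [real_inner_smul_left]
      exact_mod_cast hreal

lemma isProx_iff_isSubgradient {h : H → EReal}
    (hconv : ∀ x y : H, ∀ a b : ℝ, 0 ≤ a → 0 ≤ b → a + b = 1 →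
      h (a • x + b • y) ≤ (a : EReal) * h x + (b : EReal) * h y)
    {γ : ℝ} (hγ : 0 ≤ γ) {x p : H} :
    IsProx h γ x p ↔ IsSubgradient h p (γ⁻¹ • (x - p)) :=
  ⟨IsProx.isSubgradient hconv, IsSubgradient.isProx hγ⟩

end Prox

lemma two_smul_sub_eq_self_iff {E : Type*} [AddCommGroup E] [Module ℝ E] (P : E → E) (q z : E) :
    (2 : ℝ) • P ((2 : ℝ) • q - z) - ((2 : ℝ) • q - z) = z ↔ P ((2 : ℝ) • q - z) = q := by
  constructor
  · intro h
    apply smul_right_injective E (two_ne_zero (α := ℝ))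
    linear_combination (norm := module) h
  · intro h
    rw [h]
    module

theorem prs_optimality_conditions_general
    {H : Type*} [NormedAddCommGroup H] [InnerProductSpace ℝ H]
    (f g : H → EReal)
    (hf_conv : ∀ x y : H, ∀ a b : ℝ, 0 ≤ a → 0 ≤ b → a + b = 1 →
      f (a • x + b • y) ≤ (a : EReal) * f x + (b : EReal) * f y)
    (hg_conv : ∀ x y : H, ∀ a b : ℝ, 0 ≤ a → 0 ≤ b → a + b = 1 →
      g (a • x + b • y) ≤ (a : EReal) * g x + (b : EReal) * g y)
    (γ : ℝ) (hγ : 0 < γ)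
    (proxf proxg : H → H)
    (hproxf : ∀ x p : H, proxf x = p ↔
      ∀ y : H, f p + ((1 / (2 * γ) * ‖p - x‖ ^ 2 : ℝ) : EReal) ≤
        f y + ((1 / (2 * γ) * ‖y - x‖ ^ 2 : ℝ) : EReal))
    (hproxg : ∀ x p : H, proxg x = p ↔
      ∀ y : H, g p + ((1 / (2 * γ) * ‖p - x‖ ^ 2 : ℝ) : EReal) ≤
        g y + ((1 / (2 * γ) * ‖y - x‖ ^ 2 : ℝ) : EReal))
    (T : H → H)
    (hT : ∀ w : H, T w = (2 : ℝ) • proxf ((2 : ℝ) • proxg w - w) - ((2 : ℝ) • proxg w - w)) :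
    (∀ x : H,
      (∃ u v : H,
        (∀ w : H, f x + ((inner ℝ u (w - x) : ℝ) : EReal) ≤ f w) ∧
        (∀ w : H, g x + ((inner ℝ v (w - x) : ℝ) : EReal) ≤ g w) ∧
        u + v = 0) ↔
      (∃ zf : H, T zf = zf ∧ proxg zf = x)) ∧
    (∀ zstar : H, T zstar = zstar →
      ∃ u : H,
        (∀ w : H, g (proxg zstar) + ((inner ℝ u (w - proxg zstar) : ℝ) : EReal) ≤ g w) ∧
        zstar - proxg zstar = γ • u) := by

  have proxg_iff (z x : H) : proxg z = x ↔ IsSubgradient g x (γ⁻¹ • (z - x)) :=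
    (hproxg z x).trans (isProx_iff_isSubgradient hg_conv hγ.le)
  have proxf_iff (z x : H) : proxf z = x ↔ IsSubgradient f x (γ⁻¹ • (z - x)) :=
    (hproxf z x).trans (isProx_iff_isSubgradient hf_conv hγ.le)
  have fixed_iff (z : H) : T z = z ↔ proxf ((2 : ℝ) • proxg z - z) = proxg z := by
    rw [hT]
    exact two_smul_sub_eq_self_iff proxf (proxg z) z
  refine ⟨fun x => ⟨?_, ?_⟩, fun z _ => ⟨γ⁻¹ • (z - proxg z), (proxg_iff z _).1 rfl, ?_⟩⟩
  · rintro ⟨u, v, hu, hv, huv⟩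
    have hz : proxg (x + γ • v) = x := by
      rw [proxg_iff, add_sub_cancel_left, smul_smul, inv_mul_cancel₀ hγ.ne', one_smul]
      exact hv
    refine ⟨x + γ • v, (fixed_iff _).2 ?_, hz⟩
    rw [hz, proxf_iff, show (2 : ℝ) • x - (x + γ • v) - x = γ • u by
      rw [eq_neg_of_add_eq_zero_left huv]; module, smul_smul, inv_mul_cancel₀ hγ.ne', one_smul]
    exact hu
  · rintro ⟨z, hz, rfl⟩
    exact ⟨_, _, (proxf_iff _ _).1 ((fixed_iff z).1 hz), (proxg_iff z _).1 rfl, by module⟩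
  · rw [smul_smul, mul_inv_cancel₀ hγ.ne', one_smul]

/-- Lemma (optimality conditions of `T_PRS`): for closed, proper, convex
`f, g : H → ℝ ∪ {∞}` and `γ > 0`, a point `x` satisfies `0 ∈ ∂f(x) + ∂g(x)` if and only if
there is `z` with `T_PRS z = z` and `x = prox_{γg}(z)`; moreover, if `z*` is a fixed point of
`T_PRS` and `x* = prox_{γg}(z*)`, then `z* − x* ∈ γ ∂g(x*)`. -/
theorem prs_optimality_conditions
    {H : Type*} [NormedAddCommGroup H] [InnerProductSpace ℝ H] [CompleteSpace H]
    (f g : H → EReal)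
    (hf_bot : ∀ x, f x ≠ ⊥) (hg_bot : ∀ x, g x ≠ ⊥)
    (hf_proper : ∃ x, f x ≠ ⊤) (hg_proper : ∃ x, g x ≠ ⊤)
    (hf_lsc : LowerSemicontinuous f) (hg_lsc : LowerSemicontinuous g)
    (hf_conv : ∀ x y : H, ∀ a b : ℝ, 0 ≤ a → 0 ≤ b → a + b = 1 →
      f (a • x + b • y) ≤ (a : EReal) * f x + (b : EReal) * f y)
    (hg_conv : ∀ x y : H, ∀ a b : ℝ, 0 ≤ a → 0 ≤ b → a + b = 1 →
      g (a • x + b • y) ≤ (a : EReal) * g x + (b : EReal) * g y)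
    (γ : ℝ) (hγ : 0 < γ)
    (proxf proxg : H → H)
    (hproxf : ∀ x p : H, proxf x = p ↔
      ∀ y : H, f p + ((1 / (2 * γ) * ‖p - x‖ ^ 2 : ℝ) : EReal) ≤
        f y + ((1 / (2 * γ) * ‖y - x‖ ^ 2 : ℝ) : EReal))
    (hproxg : ∀ x p : H, proxg x = p ↔
      ∀ y : H, g p + ((1 / (2 * γ) * ‖p - x‖ ^ 2 : ℝ) : EReal) ≤
        g y + ((1 / (2 * γ) * ‖y - x‖ ^ 2 : ℝ) : EReal))
    (T : H → H)
    (hT : ∀ w : H, T w = (2 : ℝ) • proxf ((2 : ℝ) • proxg w - w) - ((2 : ℝ) • proxg w - w)) :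
    (∀ x : H,
      (∃ u v : H,
        (∀ w : H, f x + ((inner ℝ u (w - x) : ℝ) : EReal) ≤ f w) ∧
        (∀ w : H, g x + ((inner ℝ v (w - x) : ℝ) : EReal) ≤ g w) ∧
        u + v = 0) ↔
      (∃ zf : H, T zf = zf ∧ proxg zf = x)) ∧
    (∀ zstar : H, T zstar = zstar →
      ∃ u : H,
        (∀ w : H, g (proxg zstar) + ((inner ℝ u (w - proxg zstar) : ℝ) : EReal) ≤ g w) ∧
        zstar - proxg zstar = γ • u) :=
  prs_optimality_conditions_general f g hf_conv hg_conv γ hγ proxf proxg hproxf hproxg T hT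
end

section
/- Let f, g : H → ℝ ∪ {∞} be closed, proper, convex functions on a real Hilbert space H, let γ > 0 and λ ∈ (0,1]. For z ∈ H, set x_g := prox_{γg}(z), x_f := prox_{γf}(2x_g − z), and z⁺ := (1−λ)z + λ·T_PRS(z). Then for every x in the intersection of the effective domains of f and g: 4γλ·(f(x_f) + g(x_g) − f(x) − g(x)) ≤ ‖z − x‖² − ‖z⁺ − x‖² + (1 − 1/λ)·‖z⁺ − z‖². -/
/-!
Optimality of `p = prox_{γφ}(w)` makes `(w - p) / γ` a subgradient of `φ` at `p`. Applied to `g`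
at `x_g` and to `f` at `x_f`, with test point `x`, the two subgradient inequalities add up to a
bound by inner products, and since `z⁺ - z = 2λ (x_f - x_g)` that sum of inner products is exactly
`-1/(4λ)` times the right-hand side.
-/

open scoped RealInnerProductSpace

open Set Filter Topology in
theorem le_of_forall_mem_Ioc_le_add_mul {a b c : ℝ} (h : ∀ t ∈ Ioc (0 : ℝ) 1, a ≤ b + t * c) :
    a ≤ b := by
  have hlim : Tendsto (fun t : ℝ => b + t * c) (𝓝[>] 0) (𝓝 b) := by
    have hcont : Continuous fun t : ℝ => b + t * c := by fun_prop
    simpa using (hcont.tendsto 0).mono_left nhdsWithin_le_nhds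
  exact ge_of_tendsto hlim (eventually_of_mem (Ioc_mem_nhdsGT zero_lt_one) h)

section

variable {H : Type*} [NormedAddCommGroup H]

/-- `p = prox_{γφ}(w)`. -/
def IsProxPoint (φ : H → EReal) (γ : ℝ) (w p : H) : Prop :=
  ∀ y : H, φ p + ((1 / (2 * γ) * ‖p - w‖ ^ 2 : ℝ) : EReal) ≤
    φ y + ((1 / (2 * γ) * ‖y - w‖ ^ 2 : ℝ) : EReal)

variable {φ : H → EReal} {γ : ℝ} {w p y : H}

theorem IsProxPoint.ne_top (hp : IsProxPoint φ γ w p) (hy_bot : φ y ≠ ⊥) (hy : φ y ≠ ⊤) :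
    φ p ≠ ⊤ := by
  intro hp_top
  have h := hp y
  rw [hp_top, ← EReal.coe_toReal hy hy_bot, ← EReal.coe_add,
    EReal.top_add_of_ne_bot (EReal.coe_ne_bot _), top_le_iff] at h
  exact EReal.coe_ne_top _ h

variable [InnerProductSpace ℝ H]

theorem IsProxPoint.toReal_add_le_segment (hp : IsProxPoint φ γ w p) (hbot : ∀ x, φ x ≠ ⊥)
    (hconv : ∀ x y : H, ∀ a b : ℝ, 0 ≤ a → 0 ≤ b → a + b = 1 →
      φ (a • x + b • y) ≤ (a : EReal) * φ x + (b : EReal) * φ y)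
    (hy : φ y ≠ ⊤) {t : ℝ} (ht0 : 0 ≤ t) (ht1 : t ≤ 1) :
    (φ p).toReal + 1 / (2 * γ) * ‖p - w‖ ^ 2 ≤
      (1 - t) * (φ p).toReal + t * (φ y).toReal + 1 / (2 * γ) * ‖p - w + t • (y - p)‖ ^ 2 := by
  have hp_top := hp.ne_top (hbot y) hy
  have hmin := hp ((1 - t) • p + t • y)
  have hcomb := hconv p y (1 - t) t (by linarith) ht0 (by ring)
  have hseg : (1 - t) • p + t • y - w = p - w + t • (y - p) := by module
  rw [hseg] at hmin
  rw [← EReal.coe_toReal hp_top (hbot p), ← EReal.coe_toReal hy (hbot y), ← EReal.coe_mul,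
    ← EReal.coe_mul, ← EReal.coe_add] at hcomb
  rw [← EReal.coe_toReal hp_top (hbot p)] at hmin
  exact_mod_cast hmin.trans (add_le_add hcomb le_rfl)

/-- `(w - p) / γ` is a subgradient of `φ` at `p = prox_{γφ}(w)`. -/
theorem IsProxPoint.inner_le (hp : IsProxPoint φ γ w p) (hγ : 0 < γ) (hbot : ∀ x, φ x ≠ ⊥)
    (hconv : ∀ x y : H, ∀ a b : ℝ, 0 ≤ a → 0 ≤ b → a + b = 1 →
      φ (a • x + b • y) ≤ (a : EReal) * φ x + (b : EReal) * φ y)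
    (hy : φ y ≠ ⊤) :
    ⟪w - p, y - p⟫ ≤ γ * ((φ y).toReal - (φ p).toReal) := by
  -- Comparing `p` with `p + t (y - p)` and letting `t → 0⁺`.
  refine le_of_forall_mem_Ioc_le_add_mul (c := ‖y - p‖ ^ 2 / 2) fun t ⟨ht0, ht1⟩ => ?_
  have h := hp.toReal_add_le_segment hbot hconv hy ht0.le ht1
  rw [norm_add_sq_real, inner_smul_right, norm_smul, mul_pow, Real.norm_eq_abs, sq_abs] at h
  have hinner : ⟪w - p, y - p⟫ = -⟪p - w, y - p⟫ := by rw [← inner_neg_left, neg_sub]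
  rw [hinner]
  field_simp at h
  refine le_of_mul_le_mul_left ?_ ht0
  linarith

theorem prs_norm_sq_identity {lam : ℝ} (hlam : lam ≠ 0) {z x xg xf zp : H}
    (hzp : zp = z + (2 * lam) • (xf - xg)) :
    ‖z - x‖ ^ 2 - ‖zp - x‖ ^ 2 + (1 - 1 / lam) * ‖zp - z‖ ^ 2 =
      -(4 * lam) * (⟪(2 : ℝ) • xg - z - xf, x - xf⟫ + ⟪z - xg, x - xg⟫) := by
  have hzpx : zp - x = (z - x) + (2 * lam) • (xf - xg) := by rw [hzp]; module
  have hzpz : zp - z = (2 * lam) • (xf - xg) := by rw [hzp]; module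
  rw [hzpx, hzpz, norm_add_sq_real, norm_smul, inner_smul_right, mul_pow, Real.norm_eq_abs,
    sq_abs, ← real_inner_self_eq_norm_sq, ← real_inner_self_eq_norm_sq]
  simp only [inner_sub_left, inner_sub_right, inner_smul_left, conj_trivial,
    real_inner_comm x xf, real_inner_comm x xg, real_inner_comm xg xf, real_inner_comm x z]
  field_simp
  ring

end

theorem prs_upper_fundamental_inequality_general
    {H : Type*} [NormedAddCommGroup H] [InnerProductSpace ℝ H]
    (f g : H → EReal)
    (hf_bot : ∀ x, f x ≠ ⊥) (hg_bot : ∀ x, g x ≠ ⊥)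
    (hf_conv : ∀ x y : H, ∀ a b : ℝ, 0 ≤ a → 0 ≤ b → a + b = 1 →
      f (a • x + b • y) ≤ (a : EReal) * f x + (b : EReal) * f y)
    (hg_conv : ∀ x y : H, ∀ a b : ℝ, 0 ≤ a → 0 ≤ b → a + b = 1 →
      g (a • x + b • y) ≤ (a : EReal) * g x + (b : EReal) * g y)
    (γ : ℝ) (hγ : 0 < γ)
    (proxf proxg : H → H)
    (hproxf : ∀ x p : H, proxf x = p ↔
      ∀ y : H, f p + ((1 / (2 * γ) * ‖p - x‖ ^ 2 : ℝ) : EReal) ≤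
        f y + ((1 / (2 * γ) * ‖y - x‖ ^ 2 : ℝ) : EReal))
    (hproxg : ∀ x p : H, proxg x = p ↔
      ∀ y : H, g p + ((1 / (2 * γ) * ‖p - x‖ ^ 2 : ℝ) : EReal) ≤
        g y + ((1 / (2 * γ) * ‖y - x‖ ^ 2 : ℝ) : EReal))
    (lam : ℝ) (hlam : lam ∈ Set.Ioc (0 : ℝ) 1)
    (z xg xf zp : H)
    (hxg : xg = proxg z)
    (hxf : xf = proxf ((2 : ℝ) • xg - z))
    (hzp : zp = (1 - lam) • z +
      lam • ((2 : ℝ) • proxf ((2 : ℝ) • proxg z - z) - ((2 : ℝ) • proxg z - z)))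
    (x : H) (hx : f x ≠ ⊤) (hgx : g x ≠ ⊤) :
    ((4 * γ * lam : ℝ) : EReal) * (f xf + g xg - (f x + g x)) ≤
      ((‖z - x‖ ^ 2 - ‖zp - x‖ ^ 2 + (1 - 1 / lam) * ‖zp - z‖ ^ 2 : ℝ) : EReal) := by
  have hg_prox : IsProxPoint g γ z xg := (hproxg z xg).mp hxg.symm
  have hf_prox : IsProxPoint f γ ((2 : ℝ) • xg - z) xf := (hproxf _ xf).mp hxf.symm
  have hzp' : zp = z + (2 * lam) • (xf - xg) := by rw [hzp, ← hxg, ← hxf]; module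
  have hf_sub := hf_prox.inner_le hγ hf_bot hf_conv hx
  have hg_sub := hg_prox.inner_le hγ hg_bot hg_conv hgx
  rw [prs_norm_sq_identity hlam.1.ne' hzp',
    ← EReal.coe_toReal (hf_prox.ne_top (hf_bot x) hx) (hf_bot xf),
    ← EReal.coe_toReal (hg_prox.ne_top (hg_bot x) hgx) (hg_bot xg),
    ← EReal.coe_toReal hx (hf_bot x), ← EReal.coe_toReal hgx (hg_bot x), ← EReal.coe_add,
    ← EReal.coe_add, ← EReal.coe_sub, ← EReal.coe_mul, EReal.coe_le_coe_iff]
  have hlam4 : 0 ≤ 4 * lam := by linarith [hlam.1]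
  linarith [mul_le_mul_of_nonneg_left (add_le_add hf_sub hg_sub) hlam4]

/-- Proposition (upper fundamental inequality): for closed, proper, convex
`f, g : H → ℝ ∪ {∞}`, `γ > 0`, `λ ∈ (0,1]`, `z ∈ H`, `x_g = prox_{γg}(z)`,
`x_f = prox_{γf}(2x_g − z)` and `z⁺ = (1−λ)z + λ T_PRS(z)`, for every
`x ∈ dom f ∩ dom g`:
`4γλ (f(x_f) + g(x_g) − f(x) − g(x)) ≤ ‖z−x‖² − ‖z⁺−x‖² + (1 − 1/λ)‖z⁺−z‖²`. -/
theorem prs_upper_fundamental_inequality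
    {H : Type*} [NormedAddCommGroup H] [InnerProductSpace ℝ H] [CompleteSpace H]
    (f g : H → EReal)
    (hf_bot : ∀ x, f x ≠ ⊥) (hg_bot : ∀ x, g x ≠ ⊥)
    (hf_proper : ∃ x, f x ≠ ⊤) (hg_proper : ∃ x, g x ≠ ⊤)
    (hf_lsc : LowerSemicontinuous f) (hg_lsc : LowerSemicontinuous g)
    (hf_conv : ∀ x y : H, ∀ a b : ℝ, 0 ≤ a → 0 ≤ b → a + b = 1 →
      f (a • x + b • y) ≤ (a : EReal) * f x + (b : EReal) * f y)
    (hg_conv : ∀ x y : H, ∀ a b : ℝ, 0 ≤ a → 0 ≤ b → a + b = 1 →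
      g (a • x + b • y) ≤ (a : EReal) * g x + (b : EReal) * g y)
    (γ : ℝ) (hγ : 0 < γ)
    (proxf proxg : H → H)
    (hproxf : ∀ x p : H, proxf x = p ↔
      ∀ y : H, f p + ((1 / (2 * γ) * ‖p - x‖ ^ 2 : ℝ) : EReal) ≤
        f y + ((1 / (2 * γ) * ‖y - x‖ ^ 2 : ℝ) : EReal))
    (hproxg : ∀ x p : H, proxg x = p ↔
      ∀ y : H, g p + ((1 / (2 * γ) * ‖p - x‖ ^ 2 : ℝ) : EReal) ≤
        g y + ((1 / (2 * γ) * ‖y - x‖ ^ 2 : ℝ) : EReal))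
    (lam : ℝ) (hlam : lam ∈ Set.Ioc (0 : ℝ) 1)
    (z xg xf zp : H)
    (hxg : xg = proxg z)
    (hxf : xf = proxf ((2 : ℝ) • xg - z))
    (hzp : zp = (1 - lam) • z +
      lam • ((2 : ℝ) • proxf ((2 : ℝ) • proxg z - z) - ((2 : ℝ) • proxg z - z)))
    (x : H) (hx : f x ≠ ⊤) (hgx : g x ≠ ⊤) :
    ((4 * γ * lam : ℝ) : EReal) * (f xf + g xg - (f x + g x)) ≤
      ((‖z - x‖ ^ 2 - ‖zp - x‖ ^ 2 + (1 - 1 / lam) * ‖zp - z‖ ^ 2 : ℝ) : EReal) :=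
  prs_upper_fundamental_inequality_general f g hf_bot hg_bot hf_conv hg_conv γ hγ proxf proxg hproxf
    hproxg lam hlam z xg xf zp hxg hxf hzp x hx hgx
end

section
/- Let f, g : H → ℝ ∪ {∞} be closed, proper, convex functions on a real Hilbert space H, let γ > 0, let z* be a fixed point of T_PRS and x* := prox_{γg}(z*). Let (λ_j)_{j≥0} ⊆ (0,1], define z^{k+1} = (1−λ_k)z^k + λ_k T_PRS(z^k) from z^0 ∈ H, set x_g^k := prox_{γg}(z^k), x_f^k := prox_{γf}(2x_g^k − z^k), Λ_k := ∑_{i=0}^k λ_i, x̄_f^k := (1/Λ_k)∑_{i=0}^k λ_i x_f^i, and x̄_g^k := (1/Λ_k)∑_{i=0}^k λ_i x_g^i. Then for all k ≥ 0: −2‖z^0 − z*‖·‖z* − x*‖/(γΛ_k) ≤ f(x̄_f^k) + g(x̄_g^k) − f(x*) − g(x*) ≤ ‖z^0 − x*‖²/(4γΛ_k), and ‖x̄_g^k − x̄_f^k‖ ≤ 2‖z^0 − z*‖/Λ_k. -/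
/-!
On its effective domain an `EReal`-valued proper convex function is a real convex function, and
there the proximal map `P` of `γ F` is characterised by the variational inequality
`γ F (P x) + ⟪x - P x, y - P x⟫ ≤ γ F y`; every estimate follows from adding such inequalities.

At an iterate `w` with `x_g = prox_{γg} w`, `x_f = prox_{γf} (2 x_g - w)`, the two inequalities
tested at a point `x` give `γ (f x_f + g x_g - f x - g x) ≤ -‖x_f - x_g‖² - ⟪w - x, x_f - x_g⟫`.
Since `z^{k+1} = z^k + 2 λ_k (x_f^k - x_g^k)`, expanding `‖z^{k+1} - x‖²` turns this into
`4 γ λ_k (f x_f^k + g x_g^k - f x - g x) ≤ ‖z^k - x‖² - ‖z^{k+1} - x‖²` when `λ_k ≤ 1`;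
telescoping and Jensen's inequality give the upper bound.

The same relation gives `x̄_g^k - x̄_f^k = (z^0 - z^{k+1}) / (2 Λ_k)`, which is controlled by the
Fejér monotonicity of `z^k` towards `z*`: the reflections `2 prox - I` are nonexpansive because
prox maps are firmly nonexpansive. At the fixed point, `(z* - x*) / γ` is a subgradient of `g`
at `x*` and its negative one of `f`, so `γ (f y + g y' - f x* - g x*) ≥ ⟪z* - x*, y' - y⟫`;
Cauchy–Schwarz then gives the lower bound.
-/

open Finset Filter Topology RealInnerProductSpace

section

variable {H : Type*} [NormedAddCommGroup H] [InnerProductSpace ℝ H]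

lemma le_of_forall_Ioc_le_add_mul {a b d : ℝ} (h : ∀ t ∈ Set.Ioc (0 : ℝ) 1, a ≤ b + t * d) :
    a ≤ b := by
  have hlim : Tendsto (fun t : ℝ => b + t * d) (𝓝[>] 0) (𝓝 b) := by
    have hcont : Continuous fun t : ℝ => b + t * d := by fun_prop
    simpa using (hcont.tendsto 0).mono_left nhdsWithin_le_nhds
  exact ge_of_tendsto hlim (eventually_of_mem (Ioc_mem_nhdsGT one_pos) h)

lemma convexOn_toReal_of_forall_le {f : H → EReal} (hbot : ∀ x, f x ≠ ⊥)
    (hconv : ∀ x y : H, ∀ a b : ℝ, 0 ≤ a → 0 ≤ b → a + b = 1 →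
      f (a • x + b • y) ≤ (a : EReal) * f x + (b : EReal) * f y) :
    ConvexOn ℝ {x | f x ≠ ⊤} fun x => (f x).toReal := by
  have key : ∀ x, f x ≠ ⊤ → ∀ y, f y ≠ ⊤ → ∀ a b : ℝ, 0 ≤ a → 0 ≤ b → a + b = 1 →
      f (a • x + b • y) ≤ ((a * (f x).toReal + b * (f y).toReal : ℝ) : EReal) := by
    intro x hx y hy a b ha hb hab
    rw [EReal.coe_add, EReal.coe_mul, EReal.coe_mul, EReal.coe_toReal hx (hbot x),
      EReal.coe_toReal hy (hbot y)]
    exact hconv x y a b ha hb hab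
  refine ⟨fun x hx y hy a b ha hb hab => ?_, fun x hx y hy a b ha hb hab => ?_⟩
  · exact ne_top_of_le_ne_top (EReal.coe_ne_top _) (key x hx y hy a b ha hb hab)
  · have h := key x hx y hy a b ha hb hab
    simpa only [EReal.toReal_coe, smul_eq_mul] using
      EReal.toReal_le_toReal h (hbot _) (EReal.coe_ne_top _)

/-- `P` is the proximal map of `γ F` in variational form, `(x - P x) / γ ∈ ∂F (P x)`, where `s`
plays the role of the effective domain of `F`. -/
def IsProxMap (F : H → ℝ) (s : Set H) (γ : ℝ) (P : H → H) : Prop :=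
  ∀ x, P x ∈ s ∧ ∀ y ∈ s, γ * F (P x) + ⟪x - P x, y - P x⟫ ≤ γ * F y

def reflect (P : H → H) (x : H) : H := (2 : ℝ) • P x - x

lemma reflect_reflect_sub (P Q : H → H) (w : H) :
    reflect P (reflect Q w) - w = (2 : ℝ) • (P (reflect Q w) - Q w) := by
  unfold reflect; module

lemma antitone_norm_sub_of_krasnoselskiiMann {T : H → H} {u : H}
    (hT : ∀ w, ‖T w - u‖ ≤ ‖w - u‖) {lam : ℕ → ℝ} (hlam : ∀ k, lam k ∈ Set.Icc (0 : ℝ) 1)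
    {z : ℕ → H} (hz : ∀ k, z (k + 1) = (1 - lam k) • z k + lam k • T (z k)) :
    Antitone fun k => ‖z k - u‖ := by
  refine antitone_nat_of_succ_le fun k => ?_
  obtain ⟨hl0, hl1⟩ := hlam k
  calc ‖z (k + 1) - u‖ = ‖(1 - lam k) • (z k - u) + lam k • (T (z k) - u)‖ := by
        rw [hz]; congr 1; module
    _ ≤ (1 - lam k) * ‖z k - u‖ + lam k * ‖T (z k) - u‖ := by
        refine (norm_add_le _ _).trans_eq ?_
        rw [norm_smul, norm_smul, Real.norm_of_nonneg (by linarith), Real.norm_of_nonneg hl0]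
    _ ≤ ‖z k - u‖ := by nlinarith [hT (z k)]

variable {F G : H → ℝ} {s t : Set H} {γ : ℝ} {P Q : H → H}

lemma ConvexOn.inner_le_of_isMinOn (hF : ConvexOn ℝ s F) {c : ℝ}
    {x p y : H} (hmin : IsMinOn (fun y => F y + c * ‖y - x‖ ^ 2) s p) (hp : p ∈ s) (hy : y ∈ s) :
    F p + 2 * c * ⟪x - p, y - p⟫ ≤ F y := by
  refine le_of_forall_Ioc_le_add_mul (d := c * ‖y - p‖ ^ 2) fun t ⟨ht0, ht1⟩ => ?_
  have hmem : (1 - t) • p + t • y ∈ s := hF.1 hp hy (by linarith) ht0.le (by ring)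
  have hconv := hF.2 hp hy (by linarith : 0 ≤ 1 - t) ht0.le (by ring)
  have hopt := isMinOn_iff.1 hmin _ hmem
  have hsq : ‖(1 - t) • p + t • y - x‖ ^ 2 =
      ‖p - x‖ ^ 2 - 2 * t * ⟪x - p, y - p⟫ + t ^ 2 * ‖y - p‖ ^ 2 := by
    rw [show (1 - t) • p + t • y - x = (p - x) + t • (y - p) by module, norm_add_sq_real,
      real_inner_smul_right, norm_smul, mul_pow, Real.norm_eq_abs, sq_abs,
      ← neg_sub x p, inner_neg_left]
    ring
  simp only [smul_eq_mul, hsq] at hconv hopt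
  nlinarith

lemma ConvexOn.sum_mul_map_centerMass_le (hF : ConvexOn ℝ s F)
    {ι : Type*} {u : Finset ι} {w : ι → ℝ} {p : ι → H} (h₀ : ∀ i ∈ u, 0 ≤ w i)
    (h₁ : 0 < ∑ i ∈ u, w i) (hp : ∀ i ∈ u, p i ∈ s) :
    (∑ i ∈ u, w i) * F (u.centerMass w p) ≤ ∑ i ∈ u, w i * F (p i) := by
  calc _ ≤ (∑ i ∈ u, w i) * u.centerMass w (F ∘ p) :=
        mul_le_mul_of_nonneg_left (hF.map_centerMass_le h₀ h₁ hp) h₁.le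
    _ = _ := by
        simp only [Finset.centerMass, smul_eq_mul, Function.comp_apply, mul_inv_cancel_left₀ h₁.ne']

lemma isProxMap_toReal {f : H → EReal} (hbot : ∀ x, f x ≠ ⊥)
    (hconv : ConvexOn ℝ {x | f x ≠ ⊤} fun x => (f x).toReal) (hproper : ∃ y, f y ≠ ⊤)
    (hγ : 0 < γ)
    (hP : ∀ x y : H, f (P x) + ((1 / (2 * γ) * ‖P x - x‖ ^ 2 : ℝ) : EReal) ≤
      f y + ((1 / (2 * γ) * ‖y - x‖ ^ 2 : ℝ) : EReal)) :
    IsProxMap (fun x => (f x).toReal) {x | f x ≠ ⊤} γ P := by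
  intro x
  obtain ⟨y₀, hy₀⟩ := hproper
  have hPx : f (P x) ≠ ⊤ := fun h => by
    have := (hP x y₀).trans_lt (EReal.add_lt_top hy₀ (EReal.coe_ne_top _))
    rw [h, EReal.top_add_coe] at this
    exact lt_irrefl _ this
  have hmin : IsMinOn (fun y => (f y).toReal + 1 / (2 * γ) * ‖y - x‖ ^ 2) {x | f x ≠ ⊤} (P x) := by
    refine isMinOn_iff.2 fun y hy => ?_
    have h := hP x y
    rw [← EReal.coe_toReal hPx (hbot _), ← EReal.coe_toReal hy (hbot y), ← EReal.coe_add,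
      ← EReal.coe_add, EReal.coe_le_coe_iff] at h
    exact h
  refine ⟨hPx, fun y hy => ?_⟩
  have h := hconv.inner_le_of_isMinOn hmin hPx hy
  rw [show 2 * (1 / (2 * γ)) = γ⁻¹ by field_simp] at h
  have := mul_le_mul_of_nonneg_left h hγ.le
  rwa [mul_add, ← mul_assoc, mul_inv_cancel₀ hγ.ne', one_mul] at this

lemma apply_reflect_eq_of_isFixedPt {u : H}
    (hu : Function.IsFixedPt (reflect P ∘ reflect Q) u) : P (reflect Q u) = Q u := by
  have h := reflect_reflect_sub P Q u
  rw [show reflect P (reflect Q u) = u from hu, sub_self, eq_comm, smul_eq_zero] at h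
  exact sub_eq_zero.1 (h.resolve_left two_ne_zero)

lemma IsProxMap.norm_sub_sq_le_inner (hP : IsProxMap F s γ P) (x y : H) :
    ‖P x - P y‖ ^ 2 ≤ ⟪x - y, P x - P y⟫ := by
  have hx := (hP x).2 _ (hP y).1
  have hy := (hP y).2 _ (hP x).1
  have hid : ⟪x - P x, P y - P x⟫ + ⟪y - P y, P x - P y⟫ =
      ‖P x - P y‖ ^ 2 - ⟪x - y, P x - P y⟫ := by
    rw [← real_inner_self_eq_norm_sq, ← neg_sub (P x) (P y), inner_neg_right, ← sub_eq_neg_add,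
      ← inner_sub_left, ← inner_sub_left]
    congr 1; abel
  linarith

lemma IsProxMap.norm_reflect_sub_le (hP : IsProxMap F s γ P) (x y : H) :
    ‖reflect P x - reflect P y‖ ≤ ‖x - y‖ := by
  have hfirm := hP.norm_sub_sq_le_inner x y
  have hsq : ‖reflect P x - reflect P y‖ ^ 2 =
      4 * ‖P x - P y‖ ^ 2 - 4 * ⟪x - y, P x - P y⟫ + ‖x - y‖ ^ 2 := by
    rw [show reflect P x - reflect P y = (2 : ℝ) • (P x - P y) - (x - y) by unfold reflect; module,
      norm_sub_sq_real, norm_smul, real_inner_smul_left, real_inner_comm]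
    norm_num; ring
  exact (sq_le_sq₀ (norm_nonneg _) (norm_nonneg _)).1 (by linarith)

lemma IsProxMap.prs_value_le (hP : IsProxMap F s γ P) (hQ : IsProxMap G t γ Q) {x : H}
    (hxs : x ∈ s) (hxt : x ∈ t) (w : H) :
    γ * (F (P (reflect Q w)) + G (Q w) - (F x + G x)) ≤
      -‖P (reflect Q w) - Q w‖ ^ 2 - ⟪w - x, P (reflect Q w) - Q w⟫ := by
  have hf := (hP (reflect Q w)).2 x hxs
  have hg := (hQ w).2 x hxt
  have hid : ⟪reflect Q w - P (reflect Q w), x - P (reflect Q w)⟫ + ⟪w - Q w, x - Q w⟫ =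
      ‖P (reflect Q w) - Q w‖ ^ 2 + ⟪w - x, P (reflect Q w) - Q w⟫ := by
    unfold reflect
    rw [← real_inner_self_eq_norm_sq]
    simp only [inner_sub_left, inner_sub_right, real_inner_smul_left, real_inner_smul_right,
      real_inner_comm]
    ring
  linarith

lemma IsProxMap.prs_step_le (hP : IsProxMap F s γ P) (hQ : IsProxMap G t γ Q) {x : H}
    (hxs : x ∈ s) (hxt : x ∈ t) {l : ℝ} (hl : l ∈ Set.Icc (0 : ℝ) 1) (w : H) :
    4 * γ * l * (F (P (reflect Q w)) + G (Q w) - (F x + G x)) ≤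
      ‖w - x‖ ^ 2 - ‖(1 - l) • w + l • reflect P (reflect Q w) - x‖ ^ 2 := by
  obtain ⟨hl0, hl1⟩ := hl
  set d := P (reflect Q w) - Q w
  have hval := hP.prs_value_le hQ hxs hxt w
  have hsq : ‖(1 - l) • w + l • reflect P (reflect Q w) - x‖ ^ 2 =
      ‖w - x‖ ^ 2 + 4 * l * ⟪w - x, d⟫ + 4 * l ^ 2 * ‖d‖ ^ 2 := by
    rw [show (1 - l) • w + l • reflect P (reflect Q w) - x =
        (w - x) + l • (reflect P (reflect Q w) - w) by module, reflect_reflect_sub, smul_smul,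
      norm_add_sq_real, real_inner_smul_right, norm_smul, mul_pow, Real.norm_eq_abs, sq_abs]
    ring
  have hl2 : 0 ≤ l * (1 - l) * ‖d‖ ^ 2 :=
    mul_nonneg (mul_nonneg hl0 (by linarith)) (sq_nonneg _)
  nlinarith [mul_le_mul_of_nonneg_left hval (by linarith : (0 : ℝ) ≤ 4 * l)]

variable {lam : ℕ → ℝ} {z : ℕ → H}

lemma IsProxMap.centerMass_mem (hs : Convex ℝ s) (hP : IsProxMap F s γ P)
    (hlam : ∀ k, lam k ∈ Set.Ioc (0 : ℝ) 1) (v : ℕ → H) (n : ℕ) :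
    ((range (n + 1)).centerMass lam fun i => P (v i)) ∈ s :=
  hs.centerMass_mem (fun i _ => (hlam i).1.le)
    (sum_pos (fun i _ => (hlam i).1) nonempty_range_add_one) fun i _ => (hP (v i)).1

lemma IsProxMap.prs_sum_le (hP : IsProxMap F s γ P) (hQ : IsProxMap G t γ Q)
    (hlam : ∀ k, lam k ∈ Set.Icc (0 : ℝ) 1)
    (hz : ∀ k, z (k + 1) = (1 - lam k) • z k + lam k • reflect P (reflect Q (z k)))
    {x : H} (hxs : x ∈ s) (hxt : x ∈ t) (n : ℕ) :
    4 * γ * ∑ i ∈ range n, lam i * (F (P (reflect Q (z i))) + G (Q (z i)) - (F x + G x)) ≤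
      ‖z 0 - x‖ ^ 2 :=
  calc _ ≤ ∑ i ∈ range n, (‖z i - x‖ ^ 2 - ‖z (i + 1) - x‖ ^ 2) := by
        rw [mul_sum]
        refine sum_le_sum fun i _ => ?_
        rw [← mul_assoc, hz]
        exact hP.prs_step_le hQ hxs hxt (hlam i) (z i)
    _ = ‖z 0 - x‖ ^ 2 - ‖z n - x‖ ^ 2 := sum_range_sub' (fun i => ‖z i - x‖ ^ 2) n
    _ ≤ ‖z 0 - x‖ ^ 2 := sub_le_self _ (sq_nonneg _)

lemma IsProxMap.prs_ergodic_value_le (hF : ConvexOn ℝ s F) (hG : ConvexOn ℝ t G)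
    (hP : IsProxMap F s γ P) (hQ : IsProxMap G t γ Q) (hγ : 0 < γ)
    (hlam : ∀ k, lam k ∈ Set.Ioc (0 : ℝ) 1)
    (hz : ∀ k, z (k + 1) = (1 - lam k) • z k + lam k • reflect P (reflect Q (z k)))
    {x : H} (hxs : x ∈ s) (hxt : x ∈ t) (n : ℕ) :
    F ((range (n + 1)).centerMass lam fun i => P (reflect Q (z i))) +
        G ((range (n + 1)).centerMass lam fun i => Q (z i)) - (F x + G x) ≤
      ‖z 0 - x‖ ^ 2 / (4 * γ * ∑ i ∈ range (n + 1), lam i) := by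
  have h₀ : ∀ i ∈ range (n + 1), 0 ≤ lam i := fun i _ => (hlam i).1.le
  have hΛ : 0 < ∑ i ∈ range (n + 1), lam i := sum_pos (fun i _ => (hlam i).1) nonempty_range_add_one
  have hf := hF.sum_mul_map_centerMass_le (p := fun i => P (reflect Q (z i))) h₀ hΛ
    fun i _ => (hP _).1
  have hg := hG.sum_mul_map_centerMass_le (p := fun i => Q (z i)) h₀ hΛ fun i _ => (hQ _).1
  have hsum := hP.prs_sum_le hQ (fun k => Set.Ioc_subset_Icc_self (hlam k)) hz hxs hxt (n + 1)
  simp only [mul_sub, mul_add, sum_add_distrib, sum_sub_distrib, ← sum_mul] at hsum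
  rw [le_div_iff₀ (by positivity)]
  nlinarith

lemma prs_centerMass_sub_centerMass
    (hz : ∀ k, z (k + 1) = (1 - lam k) • z k + lam k • reflect P (reflect Q (z k))) (n : ℕ) :
    ((range n).centerMass lam fun i => Q (z i)) -
        (range n).centerMass lam (fun i => P (reflect Q (z i))) =
      (2 * ∑ i ∈ range n, lam i)⁻¹ • (z 0 - z n) := by
  have hstep : ∀ i, lam i • Q (z i) - lam i • P (reflect Q (z i)) =
      (2 : ℝ)⁻¹ • (z i - z (i + 1)) := by
    intro i
    rw [hz, show z i - ((1 - lam i) • z i + lam i • reflect P (reflect Q (z i))) =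
      -(lam i • (reflect P (reflect Q (z i)) - z i)) by module, reflect_reflect_sub]
    module
  simp only [Finset.centerMass]
  rw [← smul_sub, ← sum_sub_distrib, sum_congr rfl fun i _ => hstep i, ← smul_sum,
    sum_range_sub', smul_smul, mul_inv, mul_comm]

lemma IsProxMap.norm_prs_centerMass_sub_le (hP : IsProxMap F s γ P) (hQ : IsProxMap G t γ Q)
    (hlam : ∀ k, lam k ∈ Set.Icc (0 : ℝ) 1)
    (hz : ∀ k, z (k + 1) = (1 - lam k) • z k + lam k • reflect P (reflect Q (z k)))
    {u : H} (hu : Function.IsFixedPt (reflect P ∘ reflect Q) u) (n : ℕ) :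
    ‖((range n).centerMass lam fun i => Q (z i)) -
        (range n).centerMass lam fun i => P (reflect Q (z i))‖ ≤
      ‖z 0 - u‖ / ∑ i ∈ range n, lam i := by
  have hu' : reflect P (reflect Q u) = u := hu
  have hfejer := antitone_norm_sub_of_krasnoselskiiMann (T := reflect P ∘ reflect Q)
    (fun w => by
      have := (hP.norm_reflect_sub_le _ _).trans (hQ.norm_reflect_sub_le w u)
      rwa [hu'] at this) hlam hz (Nat.zero_le n)
  have hΛ : 0 ≤ ∑ i ∈ range n, lam i := sum_nonneg fun i _ => (hlam i).1
  rw [prs_centerMass_sub_centerMass hz, norm_smul, Real.norm_of_nonneg (by positivity)]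
  calc (2 * ∑ i ∈ range n, lam i)⁻¹ * ‖z 0 - z n‖
      ≤ (2 * ∑ i ∈ range n, lam i)⁻¹ * (‖z 0 - u‖ + ‖z n - u‖) := by
        gcongr
        exact norm_sub_rev (z n) u ▸ norm_sub_le_norm_sub_add_norm_sub _ _ _
    _ ≤ (2 * ∑ i ∈ range n, lam i)⁻¹ * (2 * ‖z 0 - u‖) := by gcongr; linarith [hfejer]
    _ = ‖z 0 - u‖ / ∑ i ∈ range n, lam i := by ring

lemma IsProxMap.inner_le_of_isFixedPt (hP : IsProxMap F s γ P) (hQ : IsProxMap G t γ Q)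
    {u : H} (hu : Function.IsFixedPt (reflect P ∘ reflect Q) u) {y₁ y₂ : H} (hy₁ : y₁ ∈ s)
    (hy₂ : y₂ ∈ t) :
    ⟪u - Q u, y₂ - y₁⟫ ≤ γ * (F y₁ + G y₂ - (F (Q u) + G (Q u))) := by
  have hf := (hP (reflect Q u)).2 y₁ hy₁
  rw [apply_reflect_eq_of_isFixedPt hu] at hf
  have hg := (hQ u).2 y₂ hy₂
  have hrefl : ⟪reflect Q u - Q u, y₁ - Q u⟫ = -⟪u - Q u, y₁ - Q u⟫ := by
    rw [← inner_neg_left]; congr 1; unfold reflect; module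
  have hsplit : ⟪u - Q u, y₂ - y₁⟫ = ⟪u - Q u, y₂ - Q u⟫ - ⟪u - Q u, y₁ - Q u⟫ := by
    rw [← inner_sub_right]; congr 1; abel
  linarith

lemma IsProxMap.prs_ergodic_value_ge (hs : Convex ℝ s) (ht : Convex ℝ t)
    (hP : IsProxMap F s γ P) (hQ : IsProxMap G t γ Q) (hγ : 0 < γ)
    (hlam : ∀ k, lam k ∈ Set.Ioc (0 : ℝ) 1)
    (hz : ∀ k, z (k + 1) = (1 - lam k) • z k + lam k • reflect P (reflect Q (z k)))
    {u : H} (hu : Function.IsFixedPt (reflect P ∘ reflect Q) u) (n : ℕ) :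
    -(‖z 0 - u‖ * ‖u - Q u‖ / (γ * ∑ i ∈ range (n + 1), lam i)) ≤
      F ((range (n + 1)).centerMass lam fun i => P (reflect Q (z i))) +
        G ((range (n + 1)).centerMass lam fun i => Q (z i)) - (F (Q u) + G (Q u)) := by
  have hΛ : 0 < ∑ i ∈ range (n + 1), lam i := sum_pos (fun i _ => (hlam i).1) nonempty_range_add_one
  have hin := hP.inner_le_of_isFixedPt hQ hu (hP.centerMass_mem hs hlam (fun i => reflect Q (z i)) n)
    (hQ.centerMass_mem ht hlam z n)
  have hcs := neg_le_of_abs_le (abs_real_inner_le_norm (u - Q u)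
    (((range (n + 1)).centerMass lam fun i => Q (z i)) -
      (range (n + 1)).centerMass lam fun i => P (reflect Q (z i))))
  have hgap := hP.norm_prs_centerMass_sub_le hQ (fun k => Set.Ioc_subset_Icc_self (hlam k)) hz hu
    (n + 1)
  rw [le_div_iff₀ hΛ] at hgap
  rw [neg_le, le_div_iff₀ (by positivity)]
  nlinarith [mul_le_mul_of_nonneg_left hgap (norm_nonneg (u - Q u))]

end

theorem relaxed_prs_ergodic_convergence_general
    {H : Type*} [NormedAddCommGroup H] [InnerProductSpace ℝ H]
    (f g : H → EReal)
    (hf_bot : ∀ x, f x ≠ ⊥) (hg_bot : ∀ x, g x ≠ ⊥)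
    (hf_proper : ∃ x, f x ≠ ⊤) (hg_proper : ∃ x, g x ≠ ⊤)
    (hf_conv : ∀ x y : H, ∀ a b : ℝ, 0 ≤ a → 0 ≤ b → a + b = 1 →
      f (a • x + b • y) ≤ (a : EReal) * f x + (b : EReal) * f y)
    (hg_conv : ∀ x y : H, ∀ a b : ℝ, 0 ≤ a → 0 ≤ b → a + b = 1 →
      g (a • x + b • y) ≤ (a : EReal) * g x + (b : EReal) * g y)
    (γ : ℝ) (hγ : 0 < γ)
    (proxf proxg : H → H)
    (hproxf : ∀ x p : H, proxf x = p ↔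
      ∀ y : H, f p + ((1 / (2 * γ) * ‖p - x‖ ^ 2 : ℝ) : EReal) ≤
        f y + ((1 / (2 * γ) * ‖y - x‖ ^ 2 : ℝ) : EReal))
    (hproxg : ∀ x p : H, proxg x = p ↔
      ∀ y : H, g p + ((1 / (2 * γ) * ‖p - x‖ ^ 2 : ℝ) : EReal) ≤
        g y + ((1 / (2 * γ) * ‖y - x‖ ^ 2 : ℝ) : EReal))
    (T : H → H)
    (hT : ∀ w : H, T w = (2 : ℝ) • proxf ((2 : ℝ) • proxg w - w) - ((2 : ℝ) • proxg w - w))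
    (zstar : H) (hzstar : T zstar = zstar)
    (xstar : H) (hxstar : xstar = proxg zstar)
    (lam : ℕ → ℝ) (hlam : ∀ k, lam k ∈ Set.Ioc (0 : ℝ) 1)
    (z : ℕ → H) (hz : ∀ k, z (k + 1) = (1 - lam k) • z k + lam k • T (z k))
    (xg xf : ℕ → H)
    (hxg : ∀ k, xg k = proxg (z k))
    (hxf : ∀ k, xf k = proxf ((2 : ℝ) • xg k - z k))
    (xbarf xbarg : ℕ → H)
    (hxbarf : ∀ k, xbarf k = (1 / ∑ i ∈ Finset.range (k + 1), lam i) •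
      ∑ i ∈ Finset.range (k + 1), lam i • xf i)
    (hxbarg : ∀ k, xbarg k = (1 / ∑ i ∈ Finset.range (k + 1), lam i) •
      ∑ i ∈ Finset.range (k + 1), lam i • xg i) :
    ∀ k : ℕ,
      ((-(2 * ‖z 0 - zstar‖ * ‖zstar - xstar‖ /
          (γ * ∑ i ∈ Finset.range (k + 1), lam i)) : ℝ) : EReal) ≤
        f (xbarf k) + g (xbarg k) - (f xstar + g xstar) ∧
      f (xbarf k) + g (xbarg k) - (f xstar + g xstar) ≤
        ((‖z 0 - xstar‖ ^ 2 / (4 * γ * ∑ i ∈ Finset.range (k + 1), lam i) : ℝ) : EReal) ∧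
      ‖xbarg k - xbarf k‖ ≤ 2 * ‖z 0 - zstar‖ / ∑ i ∈ Finset.range (k + 1), lam i := by
  have hF := convexOn_toReal_of_forall_le hf_bot hf_conv
  have hG := convexOn_toReal_of_forall_le hg_bot hg_conv
  have hP := isProxMap_toReal hf_bot hF hf_proper hγ fun x => (hproxf x _).1 rfl
  have hQ := isProxMap_toReal hg_bot hG hg_proper hγ fun x => (hproxg x _).1 rfl
  have hu : Function.IsFixedPt (reflect proxf ∘ reflect proxg) zstar := (hT zstar).symm.trans hzstar
  have hz' : ∀ k, z (k + 1) = (1 - lam k) • z k + lam k • reflect proxf (reflect proxg (z k)) :=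
    fun k => (hz k).trans (by rw [hT]; rfl)
  obtain rfl : xg = fun k => proxg (z k) := funext hxg
  obtain rfl : xf = fun k => proxf (reflect proxg (z k)) := funext hxf
  obtain rfl : xbarf = fun k =>
      (range (k + 1)).centerMass lam fun i => proxf (reflect proxg (z i)) :=
    funext fun k => by rw [hxbarf, one_div]; rfl
  obtain rfl : xbarg = fun k => (range (k + 1)).centerMass lam fun i => proxg (z i) :=
    funext fun k => by rw [hxbarg, one_div]; rfl
  subst hxstar
  intro k
  have hΛ : 0 < ∑ i ∈ range (k + 1), lam i :=
    sum_pos (fun i _ => (hlam i).1) nonempty_range_add_one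
  have hxf_mem := hP.centerMass_mem hF.1 hlam (fun i => reflect proxg (z i)) k
  have hxg_mem := hQ.centerMass_mem hG.1 hlam z k
  have hstar_f : f (proxg zstar) ≠ ⊤ := apply_reflect_eq_of_isFixedPt hu ▸ (hP _).1
  have hstar_g : g (proxg zstar) ≠ ⊤ := (hQ zstar).1
  rw [← EReal.coe_toReal hxf_mem (hf_bot _), ← EReal.coe_toReal hxg_mem (hg_bot _),
    ← EReal.coe_toReal hstar_f (hf_bot _), ← EReal.coe_toReal hstar_g (hg_bot _)]
  norm_cast
  refine ⟨?_, hP.prs_ergodic_value_le hF hG hQ hγ hlam hz' hstar_f hstar_g k, ?_⟩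
  · refine le_trans ?_ (hP.prs_ergodic_value_ge hF.1 hG.1 hQ hγ hlam hz' hu k)
    gcongr
    linarith [norm_nonneg (z 0 - zstar)]
  · refine (hP.norm_prs_centerMass_sub_le hQ (fun i => Set.Ioc_subset_Icc_self (hlam i)) hz' hu
      (k + 1)).trans ?_
    gcongr
    linarith [norm_nonneg (z 0 - zstar)]

/-- Theorem (ergodic convergence of relaxed PRS): for closed, proper, convex
`f, g : H → ℝ ∪ {∞}`, `γ > 0`, a fixed point `z*` of `T_PRS` with `x* = prox_{γg}(z*)`,
relaxations `λ_k ∈ (0,1]`, iterates `z^{k+1} = (1−λ_k)z^k + λ_k T_PRS z^k`,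
`x_g^k = prox_{γg}(z^k)`, `x_f^k = prox_{γf}(2x_g^k − z^k)`, `Λ_k = ∑_{i≤k} λ_i`, and ergodic
iterates `x̄_f^k, x̄_g^k`, we have for every `k`:
`−2‖z^0−z*‖‖z*−x*‖/(γΛ_k) ≤ f(x̄_f^k) + g(x̄_g^k) − f(x*) − g(x*) ≤ ‖z^0−x*‖²/(4γΛ_k)`
and `‖x̄_g^k − x̄_f^k‖ ≤ 2‖z^0−z*‖/Λ_k`. -/
theorem relaxed_prs_ergodic_convergence
    {H : Type*} [NormedAddCommGroup H] [InnerProductSpace ℝ H] [CompleteSpace H]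
    (f g : H → EReal)
    (hf_bot : ∀ x, f x ≠ ⊥) (hg_bot : ∀ x, g x ≠ ⊥)
    (hf_proper : ∃ x, f x ≠ ⊤) (hg_proper : ∃ x, g x ≠ ⊤)
    (hf_lsc : LowerSemicontinuous f) (hg_lsc : LowerSemicontinuous g)
    (hf_conv : ∀ x y : H, ∀ a b : ℝ, 0 ≤ a → 0 ≤ b → a + b = 1 →
      f (a • x + b • y) ≤ (a : EReal) * f x + (b : EReal) * f y)
    (hg_conv : ∀ x y : H, ∀ a b : ℝ, 0 ≤ a → 0 ≤ b → a + b = 1 →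
      g (a • x + b • y) ≤ (a : EReal) * g x + (b : EReal) * g y)
    (γ : ℝ) (hγ : 0 < γ)
    (proxf proxg : H → H)
    (hproxf : ∀ x p : H, proxf x = p ↔
      ∀ y : H, f p + ((1 / (2 * γ) * ‖p - x‖ ^ 2 : ℝ) : EReal) ≤
        f y + ((1 / (2 * γ) * ‖y - x‖ ^ 2 : ℝ) : EReal))
    (hproxg : ∀ x p : H, proxg x = p ↔
      ∀ y : H, g p + ((1 / (2 * γ) * ‖p - x‖ ^ 2 : ℝ) : EReal) ≤
        g y + ((1 / (2 * γ) * ‖y - x‖ ^ 2 : ℝ) : EReal))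
    (T : H → H)
    (hT : ∀ w : H, T w = (2 : ℝ) • proxf ((2 : ℝ) • proxg w - w) - ((2 : ℝ) • proxg w - w))
    (zstar : H) (hzstar : T zstar = zstar)
    (xstar : H) (hxstar : xstar = proxg zstar)
    (lam : ℕ → ℝ) (hlam : ∀ k, lam k ∈ Set.Ioc (0 : ℝ) 1)
    (z : ℕ → H) (hz : ∀ k, z (k + 1) = (1 - lam k) • z k + lam k • T (z k))
    (xg xf : ℕ → H)
    (hxg : ∀ k, xg k = proxg (z k))
    (hxf : ∀ k, xf k = proxf ((2 : ℝ) • xg k - z k))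
    (xbarf xbarg : ℕ → H)
    (hxbarf : ∀ k, xbarf k = (1 / ∑ i ∈ Finset.range (k + 1), lam i) •
      ∑ i ∈ Finset.range (k + 1), lam i • xf i)
    (hxbarg : ∀ k, xbarg k = (1 / ∑ i ∈ Finset.range (k + 1), lam i) •
      ∑ i ∈ Finset.range (k + 1), lam i • xg i) :
    ∀ k : ℕ,
      ((-(2 * ‖z 0 - zstar‖ * ‖zstar - xstar‖ /
          (γ * ∑ i ∈ Finset.range (k + 1), lam i)) : ℝ) : EReal) ≤
        f (xbarf k) + g (xbarg k) - (f xstar + g xstar) ∧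
      f (xbarf k) + g (xbarg k) - (f xstar + g xstar) ≤
        ((‖z 0 - xstar‖ ^ 2 / (4 * γ * ∑ i ∈ Finset.range (k + 1), lam i) : ℝ) : EReal) ∧
      ‖xbarg k - xbarf k‖ ≤ 2 * ‖z 0 - zstar‖ / ∑ i ∈ Finset.range (k + 1), lam i :=
  relaxed_prs_ergodic_convergence_general f g hf_bot hg_bot hf_proper hg_proper hf_conv hg_conv γ hγ
    proxf proxg hproxf hproxg T hT zstar hzstar xstar hxstar lam hlam z hz xg xf hxg hxf xbarf xbarg
    hxbarf hxbarg
end
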